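/- arXiv:0801.1212 — 11 statements merged into one kernel-verified Lean document; each statement's English description precedes it below -/
import Mathlib

section
/- The set of all (s, i) ∈ LatStr such that the lattice (ℕ, s, i) is locally finite, universal for finite lattices, and ultrahomogeneous for finite lattices is comeager in LatStr. -/
/-- The set of pairs `(s, i)` of binary operations on `ℕ` that define a lattice. -/
def LatStr : Set ((ℕ → ℕ → ℕ) × (ℕ → ℕ → ℕ)) :=
  {p | (∀ a b, p.1 a b = p.1 b a) ∧ (∀ a b c, p.1 (p.1 a b) c = p.1 a (p.1 b c)) ∧
       (∀ a b, p.2 a b = p.2 b a) ∧ (∀ a b c, p.2 (p.2 a b) c = p.2 a (p.2 b c)) ∧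
       (∀ a b, p.1 a (p.2 a b) = a) ∧ (∀ a b, p.2 a (p.1 a b) = a)}

/-- The lattice `(ℕ, s, i)` is locally finite: every finite subset is contained
in a finite subset closed under both operations (a finite sublattice). -/
def LocFinStr (p : (ℕ → ℕ → ℕ) × (ℕ → ℕ → ℕ)) : Prop :=
  ∀ S : Finset ℕ, ∃ T : Finset ℕ, S ⊆ T ∧ ∀ a ∈ T, ∀ b ∈ T, p.1 a b ∈ T ∧ p.2 a b ∈ T

/-- `e` is a lattice embedding of the lattice `A` into the lattice `(ℕ, s, i)`. -/
def StrEmb (A : Type) [Lattice A] (p : (ℕ → ℕ → ℕ) × (ℕ → ℕ → ℕ)) (e : A → ℕ) : Prop :=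
  Function.Injective e ∧
    ∀ a b : A, e (a ⊔ b) = p.1 (e a) (e b) ∧ e (a ⊓ b) = p.2 (e a) (e b)

/-- The lattice `(ℕ, s, i)` is universal for finite lattices. -/
def UnivStr (p : (ℕ → ℕ → ℕ) × (ℕ → ℕ → ℕ)) : Prop :=
  ∀ (A : Type) [Fintype A] [Lattice A], ∃ e : A → ℕ, StrEmb A p e

/-- The lattice `(ℕ, s, i)` is ultrahomogeneous for finite lattices. -/
def UltraStr (p : (ℕ → ℕ → ℕ) × (ℕ → ℕ → ℕ)) : Prop :=
  ∀ (A B : Type) [Fintype A] [Lattice A] [Fintype B] [Lattice B]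
    (j : A → B) (e : A → ℕ),
    (Function.Injective j ∧ ∀ a b : A, j (a ⊔ b) = j a ⊔ j b ∧ j (a ⊓ b) = j a ⊓ j b) →
    StrEmb A p e →
    ∃ e' : B → ℕ, StrEmb B p e' ∧ e' ∘ j = e

/-!
A structure is comeager-generic once it lies in countably many dense open sets: for each finite
`S ⊆ ℕ`, "`S` lies in a finite substructure", and for each extension problem `j : A → B`,
`e : A → ℕ` between finite lattices (up to isomorphism there are countably many), "if `e` is an
embedding then it extends along `j`". These conditions read finitely many values of `(s, i)`,
hence are open. For density, a basic open set prescribes `(s, i)` on a finite `X`. The finite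
partial lattice `Y ⊇ X` it determines is amalgamated with `B` over `A` inside the
Dedekind–MacNeille completion of the pushout order, which preserves the joins and meets that
exist in `Y`; the resulting finite lattice is then placed into `ℕ` below a chain. Universality is
ultrahomogeneity over the empty lattice.
-/

open Function Set Topology

local notation "𝒩" => (ℕ → ℕ → ℕ) × (ℕ → ℕ → ℕ)

def IsLatticeEmbedding {A B : Type*} [Lattice A] [Lattice B] (f : A → B) : Prop :=
  Injective f ∧ ∀ a b, f (a ⊔ b) = f a ⊔ f b ∧ f (a ⊓ b) = f a ⊓ f b

namespace IsLatticeEmbedding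

variable {A B C : Type*} [Lattice A] [Lattice B] [Lattice C] {f : A → B}

theorem comp {g : B → C} (hg : IsLatticeEmbedding g) (hf : IsLatticeEmbedding f) :
    IsLatticeEmbedding (g ∘ f) :=
  ⟨hg.1.comp hf.1, fun a b => by simp [hf.2 a b, hg.2 (f a) (f b)]⟩

theorem le_iff_le (hf : IsLatticeEmbedding f) {a b : A} : f a ≤ f b ↔ a ≤ b := by
  rw [← sup_eq_right, ← (hf.2 a b).1, hf.1.eq_iff, sup_eq_right]

def toOrderEmbedding (hf : IsLatticeEmbedding f) : A ↪o B :=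
  OrderEmbedding.ofMapLEIff f fun _ _ => hf.le_iff_le

theorem isLUB_pair (hf : IsLatticeEmbedding f) (a b : A) : IsLUB {f a, f b} (f (a ⊔ b)) :=
  (hf.2 a b).1 ▸ _root_.isLUB_pair

theorem isGLB_pair (hf : IsLatticeEmbedding f) (a b : A) : IsGLB {f a, f b} (f (a ⊓ b)) :=
  (hf.2 a b).2 ▸ _root_.isGLB_pair

end IsLatticeEmbedding

theorem DedekindCut.principal_eq_sup_of_isLUB {α : Type*} [Preorder α] {a b c : α}
    (h : IsLUB {a, b} c) : principal c = principal a ⊔ principal b := by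
  refine le_antisymm ?_ (sup_le ?_ ?_)
  · rw [principal_le_iff, ← lowerBounds_right]
    intro w hw
    simp only [Concept.intent_sup] at hw
    exact h.2 (by simpa [upperBounds] using hw)
  all_goals exact principal_le_principal.2 (h.1 (by simp))

theorem DedekindCut.principal_eq_inf_of_isGLB {α : Type*} [Preorder α] {a b c : α}
    (h : IsGLB {a, b} c) : principal c = principal a ⊓ principal b := by
  refine le_antisymm (le_inf ?_ ?_) ?_
  rotate_left 2
  · rw [le_principal_iff, ← upperBounds_left]
    intro w hw
    simp only [Concept.extent_inf] at hw
    exact h.2 (by simpa [lowerBounds] using hw)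
  all_goals exact principal_le_principal.2 (h.1 (by simp))

instance {α : Type*} [Preorder α] [Finite α] : Finite (DedekindCut α) :=
  Finite.of_injective _ Concept.extent_injective

/-- The pushout of `f` and `g` as a preorder: `Y ⊕ B` where comparisons between the two sides
factor through `A`. It is not antisymmetric, as `f a` and `g a` become equivalent. -/
def Amalgam {A Y B : Type*} [Preorder A] [Preorder Y] [Preorder B] (_ : A ↪o Y) (_ : A ↪o B) :
    Type _ :=
  Y ⊕ B

namespace Amalgam

variable {A Y B : Type*} [Preorder Y] [Preorder B]

section Preorder

variable [Preorder A] {f : A ↪o Y} {g : A ↪o B}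

def inl (y : Y) : Amalgam f g := Sum.inl y

def inr (b : B) : Amalgam f g := Sum.inr b

@[elab_as_elim, induction_eliminator]
protected def rec {motive : Amalgam f g → Sort*} (inl : ∀ y, motive (inl y))
    (inr : ∀ b, motive (inr b)) : ∀ x, motive x :=
  Sum.rec inl inr

instance : LE (Amalgam f g) where
  le
    | .inl x, .inl y => x ≤ y
    | .inr a, .inr b => a ≤ b
    | .inl x, .inr b => ∃ t, x ≤ f t ∧ g t ≤ b
    | .inr a, .inl y => ∃ t, a ≤ g t ∧ f t ≤ y

@[simp] theorem inl_le_inl {x y : Y} : (inl x : Amalgam f g) ≤ inl y ↔ x ≤ y := Iff.rfl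
@[simp] theorem inr_le_inr {a b : B} : (inr a : Amalgam f g) ≤ inr b ↔ a ≤ b := Iff.rfl
theorem inl_le_inr {x : Y} {b : B} : (inl x : Amalgam f g) ≤ inr b ↔ ∃ t, x ≤ f t ∧ g t ≤ b :=
  Iff.rfl
theorem inr_le_inl {a : B} {y : Y} : (inr a : Amalgam f g) ≤ inl y ↔ ∃ t, a ≤ g t ∧ f t ≤ y :=
  Iff.rfl

instance : Preorder (Amalgam f g) where
  le_refl x := by induction x <;> exact le_rfl
  le_trans x y z := by
    induction x <;> induction y <;> induction z <;>
      simp only [inl_le_inl, inr_le_inr, inl_le_inr, inr_le_inl]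
    · exact le_trans
    · exact fun hxy ⟨t, hyt, htz⟩ => ⟨t, hxy.trans hyt, htz⟩
    · rintro ⟨s, hxs, hsy⟩ ⟨t, hyt, htz⟩
      exact hxs.trans ((f.le_iff_le.2 (g.le_iff_le.1 (hsy.trans hyt))).trans htz)
    · exact fun ⟨t, hxt, hty⟩ hyz => ⟨t, hxt, hty.trans hyz⟩
    · exact fun ⟨t, hxt, hty⟩ hyz => ⟨t, hxt, hty.trans hyz⟩
    · rintro ⟨s, hxs, hsy⟩ ⟨t, hyt, htz⟩
      exact hxs.trans ((g.le_iff_le.2 (f.le_iff_le.1 (hsy.trans hyt))).trans htz)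
    · exact fun hxy ⟨t, hyt, htz⟩ => ⟨t, hxy.trans hyt, htz⟩
    · exact le_trans

instance [Finite Y] [Finite B] : Finite (Amalgam f g) := inferInstanceAs (Finite (Y ⊕ B))

theorem inl_le_inr_self (a : A) : (inl (f a) : Amalgam f g) ≤ inr (g a) := ⟨a, le_rfl, le_rfl⟩
theorem inr_le_inl_self (a : A) : (inr (g a) : Amalgam f g) ≤ inl (f a) := ⟨a, le_rfl, le_rfl⟩

end Preorder

variable [Lattice A] {f : A ↪o Y} {g : A ↪o B}

theorem isLUB_inl (hg : ∀ s t, IsLUB {g s, g t} (g (s ⊔ t))) {x y z : Y} (h : IsLUB {x, y} z) :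
    IsLUB {inl x, inl y} (inl z : Amalgam f g) := by
  refine ⟨by simpa [upperBounds] using h.1, fun w hw => ?_⟩
  simp only [upperBounds_insert, upperBounds_singleton, mem_inter_iff, mem_Ici] at hw
  induction w with
  | inl w => exact h.2 (by simpa [upperBounds] using hw)
  | inr c =>
    obtain ⟨⟨s, hxs, hsc⟩, ⟨t, hyt, htc⟩⟩ := hw
    refine ⟨s ⊔ t, h.2 ?_, (hg s t).2 ?_⟩
    · simp [upperBounds, hxs.trans (f.monotone le_sup_left), hyt.trans (f.monotone le_sup_right)]
    · simp [upperBounds, hsc, htc]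

theorem isGLB_inl (hg : ∀ s t, IsGLB {g s, g t} (g (s ⊓ t))) {x y z : Y} (h : IsGLB {x, y} z) :
    IsGLB {inl x, inl y} (inl z : Amalgam f g) := by
  refine ⟨by simpa [lowerBounds] using h.1, fun w hw => ?_⟩
  simp only [lowerBounds_insert, lowerBounds_singleton, mem_inter_iff, mem_Iic] at hw
  induction w with
  | inl w => exact h.2 (by simpa [lowerBounds] using hw)
  | inr c =>
    obtain ⟨⟨s, hcs, hsx⟩, ⟨t, hct, hty⟩⟩ := hw
    refine ⟨s ⊓ t, (hg s t).2 ?_, h.2 ?_⟩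
    · simp [lowerBounds, hcs, hct]
    · simp [lowerBounds, (f.monotone inf_le_left).trans hsx, (f.monotone inf_le_right).trans hty]

theorem isLUB_inr (hf : ∀ s t, IsLUB {f s, f t} (f (s ⊔ t))) {a b c : B} (h : IsLUB {a, b} c) :
    IsLUB {inr a, inr b} (inr c : Amalgam f g) := by
  refine ⟨by simpa [upperBounds] using h.1, fun w hw => ?_⟩
  simp only [upperBounds_insert, upperBounds_singleton, mem_inter_iff, mem_Ici] at hw
  induction w with
  | inr w => exact h.2 (by simpa [upperBounds] using hw)
  | inl y =>
    obtain ⟨⟨s, has, hsy⟩, ⟨t, hbt, hty⟩⟩ := hw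
    refine ⟨s ⊔ t, h.2 ?_, (hf s t).2 ?_⟩
    · simp [upperBounds, has.trans (g.monotone le_sup_left), hbt.trans (g.monotone le_sup_right)]
    · simp [upperBounds, hsy, hty]

theorem isGLB_inr (hf : ∀ s t, IsGLB {f s, f t} (f (s ⊓ t))) {a b c : B} (h : IsGLB {a, b} c) :
    IsGLB {inr a, inr b} (inr c : Amalgam f g) := by
  refine ⟨by simpa [lowerBounds] using h.1, fun w hw => ?_⟩
  simp only [lowerBounds_insert, lowerBounds_singleton, mem_inter_iff, mem_Iic] at hw
  induction w with
  | inr w => exact h.2 (by simpa [lowerBounds] using hw)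
  | inl y =>
    obtain ⟨⟨s, hys, hsa⟩, ⟨t, hyt, htb⟩⟩ := hw
    refine ⟨s ⊓ t, (hf s t).2 ?_, h.2 ?_⟩
    · simp [lowerBounds, hys, hyt]
    · simp [lowerBounds, (g.monotone inf_le_left).trans hsa, (g.monotone inf_le_right).trans htb]

end Amalgam

open DedekindCut in
theorem exists_finite_amalgam {A Y B : Type} [Lattice A] [PartialOrder Y] [Finite Y]
    [Lattice B] [Finite B] (f : A ↪o Y) (hf_sup : ∀ s t, IsLUB {f s, f t} (f (s ⊔ t)))
    (hf_inf : ∀ s t, IsGLB {f s, f t} (f (s ⊓ t))) {g : A → B} (hg : IsLatticeEmbedding g) :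
    ∃ (M : Type) (_ : CompleteLattice M) (_ : Finite M) (φ : Y → M) (ψ : B → M),
      Injective φ ∧ (∀ x y z, IsLUB {x, y} z → φ z = φ x ⊔ φ y) ∧
      (∀ x y z, IsGLB {x, y} z → φ z = φ x ⊓ φ y) ∧ IsLatticeEmbedding ψ ∧ ψ ∘ g = φ ∘ f := by
  let P := Amalgam f hg.toOrderEmbedding
  have equiv_of_principal_eq {x y : P} (h : principal x = principal y) : x ≤ y ∧ y ≤ x := by
    rwa [le_antisymm_iff, principal_le_principal, principal_le_principal] at h
  refine ⟨DedekindCut P, inferInstance, inferInstance, fun y => principal (Amalgam.inl y),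
    fun b => principal (Amalgam.inr b),
    fun x y h => le_antisymm (equiv_of_principal_eq h).1 (equiv_of_principal_eq h).2,
    fun x y z h => principal_eq_sup_of_isLUB (Amalgam.isLUB_inl hg.isLUB_pair h),
    fun x y z h => principal_eq_inf_of_isGLB (Amalgam.isGLB_inl hg.isGLB_pair h),
    ⟨fun a b h => le_antisymm (equiv_of_principal_eq h).1 (equiv_of_principal_eq h).2,
      fun a b => ⟨principal_eq_sup_of_isLUB (Amalgam.isLUB_inr hf_sup isLUB_pair),
        principal_eq_inf_of_isGLB (Amalgam.isGLB_inr hf_inf isGLB_pair)⟩⟩,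
    funext fun a => ?_⟩
  exact le_antisymm (principal_le_principal.2 (Amalgam.inr_le_inl_self a))
    (principal_le_principal.2 (Amalgam.inl_le_inr_self a))

/-- A copy of `ℕ` carrying the lattice structure `q` instead of the usual order. -/
def NatLattice (_ : ↥LatStr) : Type := ℕ

instance (q : ↥LatStr) : Lattice (NatLattice q) :=
  letI : Max (NatLattice q) := ⟨q.1.1⟩
  letI : Min (NatLattice q) := ⟨q.1.2⟩
  Lattice.mk' q.2.1 q.2.2.1 q.2.2.2.1 q.2.2.2.2.1 q.2.2.2.2.2.1 q.2.2.2.2.2.2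

theorem StrEmb.comp {A B : Type} [Lattice A] [Lattice B] {p : 𝒩} {e : B → ℕ}
    (he : StrEmb B p e) {j : A → B} (hj : IsLatticeEmbedding j) : StrEmb A p (e ∘ j) :=
  ⟨he.1.comp hj.1, fun a b => by simp [hj.2 a b, he.2 (j a) (j b)]⟩

theorem exists_latStr_of_injective {L : Type*} [Lattice L] {r : ℕ → L} (hr : Injective r)
    (hsup : ∀ a b, r a ⊔ r b ∈ range r) (hinf : ∀ a b, r a ⊓ r b ∈ range r) :
    ∃ p ∈ LatStr, ∀ a b, r (p.1 a b) = r a ⊔ r b ∧ r (p.2 a b) = r a ⊓ r b := by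
  let p : 𝒩 := (fun a b => invFun r (r a ⊔ r b), fun a b => invFun r (r a ⊓ r b))
  have h₁ a b : r (p.1 a b) = r a ⊔ r b := invFun_eq (hsup a b)
  have h₂ a b : r (p.2 a b) = r a ⊓ r b := invFun_eq (hinf a b)
  refine ⟨p, ⟨fun a b => hr ?_, fun a b c => hr ?_, fun a b => hr ?_, fun a b c => hr ?_,
    fun a b => hr ?_, fun a b => hr ?_⟩, fun a b => ⟨h₁ a b, h₂ a b⟩⟩ <;> simp only [h₁, h₂]
  exacts [sup_comm .., sup_assoc .., inf_comm .., inf_assoc .., sup_inf_self, inf_sup_self]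

theorem exists_latStr_strEmb {M : Type} [Lattice M] [OrderTop M] {u : M → ℕ} (hu : Injective u) :
    ∃ p ∈ LatStr, StrEmb M p u := by
  -- `ℕ` is placed in the lattice `M × ℕ`: `range u` as `M × {0}`, the rest as a chain above it.
  let r : ℕ → M × ℕ := extend u (fun m => (m, 0)) (fun n => (⊤, n + 1))
  have hr_u m : r (u m) = (m, 0) := hu.extend_apply _ _ m
  have hr_nu {n} (hn : n ∉ range u) : r n = (⊤, n + 1) := extend_apply' _ _ _ hn
  have dichotomy n : (∃ m, n = u m) ∨ n ∉ range u := by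
    by_cases hn : n ∈ range u
    exacts [.inl (hn.imp fun m hm => hm.symm), .inr hn]
  have hr : Injective r := by
    intro a b hab
    rcases dichotomy a with ⟨m, rfl⟩ | ha <;> rcases dichotomy b with ⟨m', rfl⟩ | hb <;>
      simp_all
  have max_notMem {a b} (ha : a ∉ range u) (hb : b ∉ range u) : max a b ∉ range u := by
    rcases max_choice a b with h | h <;> rwa [h]
  have min_notMem {a b} (ha : a ∉ range u) (hb : b ∉ range u) : min a b ∉ range u := by
    rcases min_choice a b with h | h <;> rwa [h]
  have hsup a b : r a ⊔ r b ∈ range r := by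
    rcases dichotomy a with ⟨m, rfl⟩ | ha <;> rcases dichotomy b with ⟨m', rfl⟩ | hb
    · exact ⟨u (m ⊔ m'), by simp [hr_u]⟩
    · exact ⟨b, by simp [hr_u, hr_nu hb]⟩
    · exact ⟨a, by simp [hr_u, hr_nu ha]⟩
    · exact ⟨max a b, by simp [hr_nu ha, hr_nu hb, hr_nu (max_notMem ha hb)]⟩
  have hinf a b : r a ⊓ r b ∈ range r := by
    rcases dichotomy a with ⟨m, rfl⟩ | ha <;> rcases dichotomy b with ⟨m', rfl⟩ | hb
    · exact ⟨u (m ⊓ m'), by simp [hr_u]⟩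
    · exact ⟨u m, by simp [hr_u, hr_nu hb]⟩
    · exact ⟨u m', by simp [hr_u, hr_nu ha]⟩
    · exact ⟨min a b, by simp [hr_nu ha, hr_nu hb, hr_nu (min_notMem ha hb)]⟩
  obtain ⟨p, hp, hpr⟩ := exists_latStr_of_injective hr hsup hinf
  exact ⟨p, hp, hu, fun a b => ⟨hr (by simp [hpr, hr_u]), hr (by simp [hpr, hr_u])⟩⟩

theorem exists_injective_leftInverse {M : Type*} [Finite M] {Y : Set ℕ} [Finite Y] {φ : Y → M}
    (hφ : Injective φ) : ∃ u : M → ℕ, Injective u ∧ ∀ y, u (φ y) = y := by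
  obtain ⟨g, hg⟩ := exists_injective_nat M
  obtain ⟨N, hN⟩ := Y.toFinite.bddAbove
  let u := extend φ (fun y => (y : ℕ)) (fun m => N + 1 + g m)
  have hu_φ y : u (φ y) = y := hφ.extend_apply _ _ y
  have hu_nφ {m} (hm : m ∉ range φ) : u m = N + 1 + g m := extend_apply' _ _ _ hm
  refine ⟨u, fun m m' h => ?_, hu_φ⟩
  by_cases hm : m ∈ range φ <;> by_cases hm' : m' ∈ range φ
  · obtain ⟨y, rfl⟩ := hm
    obtain ⟨y', rfl⟩ := hm'
    rw [hu_φ, hu_φ] at h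
    rw [Subtype.ext h]
  · obtain ⟨y, rfl⟩ := hm
    have := hN y.2
    rw [hu_φ, hu_nφ hm'] at h
    omega
  · obtain ⟨y', rfl⟩ := hm'
    have := hN y'.2
    rw [hu_φ, hu_nφ hm] at h
    omega
  · rw [hu_nφ hm, hu_nφ hm'] at h
    exact hg (by omega)

def StrClosed (p : 𝒩) (T : Set ℕ) : Prop :=
  ∀ a ∈ T, ∀ b ∈ T, p.1 a b ∈ T ∧ p.2 a b ∈ T

theorem exists_latStr_extending (q : ↥LatStr) {Y : Set ℕ} (hY : Y.Finite) {A B : Type}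
    [Lattice A] [Lattice B] [Finite B] {e : A → ℕ} (he : StrEmb A q.1 e) (heY : range e ⊆ Y)
    {j : A → B} (hj : IsLatticeEmbedding j) :
    ∃ p ∈ LatStr,
      (∀ a ∈ Y, ∀ b ∈ Y, (q.1.1 a b ∈ Y → p.1 a b = q.1.1 a b) ∧
        (q.1.2 a b ∈ Y → p.2 a b = q.1.2 a b)) ∧
      (∃ T : Finset ℕ, Y ⊆ T ∧ StrClosed p T) ∧ ∃ e' : B → ℕ, StrEmb B p e' ∧ e' ∘ j = e := by
  let Y' : Set (NatLattice q) := Y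
  have : Finite Y := hY
  have : Finite Y' := hY
  have he' : IsLatticeEmbedding (B := NatLattice q) e := he
  have isLUB_Y {x y z : Y'} (h : (z : NatLattice q) = (x : NatLattice q) ⊔ y) : IsLUB {x, y} z :=
    IsLUB.of_image (f := Subtype.val) Iff.rfl (by rw [image_pair, h]; exact isLUB_pair)
  have isGLB_Y {x y z : Y'} (h : (z : NatLattice q) = (x : NatLattice q) ⊓ y) : IsGLB {x, y} z :=
    IsGLB.of_image (f := Subtype.val) Iff.rfl (by rw [image_pair, h]; exact isGLB_pair)
  let f : A ↪o Y' := .ofMapLEIff (fun a => ⟨e a, heY ⟨a, rfl⟩⟩) fun _ _ => he'.le_iff_le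
  obtain ⟨M, _, _, φ, ψ, hφ, hφ_sup, hφ_inf, hψ, hψφ⟩ :=
    exists_finite_amalgam f (fun s t => isLUB_Y (he'.2 s t).1) (fun s t => isGLB_Y (he'.2 s t).2) hj
  obtain ⟨u, hu, huφ⟩ := exists_injective_leftInverse (Y := Y) hφ
  obtain ⟨p, hp, hpu⟩ := exists_latStr_strEmb hu
  refine ⟨p, hp, fun a ha b hb => ⟨fun hab => ?_, fun hab => ?_⟩,
    ⟨(finite_range u).toFinset, fun y hy => ?_, ?_⟩, u ∘ ψ, hpu.comp hψ, ?_⟩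
  · calc p.1 a b = p.1 (u (φ ⟨a, ha⟩)) (u (φ ⟨b, hb⟩)) :=
          (congrArg₂ _ (huφ ⟨a, ha⟩) (huφ ⟨b, hb⟩)).symm
      _ = u (φ ⟨a, ha⟩ ⊔ φ ⟨b, hb⟩) := (hpu.2 _ _).1.symm
      _ = u (φ ⟨q.1.1 a b, hab⟩) :=
          congrArg u (hφ_sup ⟨a, ha⟩ ⟨b, hb⟩ ⟨_, hab⟩ (isLUB_Y rfl)).symm
      _ = q.1.1 a b := huφ _
  · calc p.2 a b = p.2 (u (φ ⟨a, ha⟩)) (u (φ ⟨b, hb⟩)) :=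
          (congrArg₂ _ (huφ ⟨a, ha⟩) (huφ ⟨b, hb⟩)).symm
      _ = u (φ ⟨a, ha⟩ ⊓ φ ⟨b, hb⟩) := (hpu.2 _ _).2.symm
      _ = u (φ ⟨q.1.2 a b, hab⟩) :=
          congrArg u (hφ_inf ⟨a, ha⟩ ⟨b, hb⟩ ⟨_, hab⟩ (isGLB_Y rfl)).symm
      _ = q.1.2 a b := huφ _
  · simpa using ⟨φ ⟨y, hy⟩, huφ _⟩
  · simp only [Finite.coe_toFinset, StrClosed]
    rintro _ ⟨m, rfl⟩ _ ⟨m', rfl⟩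
    exact ⟨⟨m ⊔ m', (hpu.2 m m').1⟩, ⟨m ⊓ m', (hpu.2 m m').2⟩⟩
  · funext a
    change u ((ψ ∘ j) a) = e a
    rw [hψφ]
    exact huφ (f a)

def AgreeOn (X : Finset ℕ) (p q : 𝒩) : Prop :=
  ∀ a ∈ X, ∀ b ∈ X, p.1 a b = q.1 a b ∧ p.2 a b = q.2 a b

theorem exists_agreeOn_subset_of_mem_nhds {U : Set 𝒩} {q : 𝒩} (hU : U ∈ 𝓝 q) :
    ∃ X : Finset ℕ, {p | AgreeOn X p q} ⊆ U := by
  have of_mem_nhds_fun : ∀ (f : ℕ → ℕ → ℕ) (V : Set (ℕ → ℕ → ℕ)), V ∈ 𝓝 f →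
      ∃ X : Finset ℕ, ∀ g : ℕ → ℕ → ℕ, (∀ a ∈ X, ∀ b ∈ X, g a b = f a b) → g ∈ V := by
    intro f V hV
    rw [nhds_pi, Filter.mem_pi'] at hV
    obtain ⟨I, t, ht, hIt⟩ := hV
    choose J s hs hJs using fun a => Filter.mem_pi'.1 (nhds_pi (a := f a) ▸ ht a)
    refine ⟨I ∪ I.biUnion J, fun g hg => hIt fun a ha => hJs a fun b hb => ?_⟩
    have := hg a (Finset.mem_union_left _ ha) b
      (Finset.mem_union_right _ (Finset.mem_biUnion.2 ⟨a, ha, hb⟩))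
    rw [this]
    exact mem_of_mem_nhds (hs a b)
  rw [nhds_prod_eq, Filter.mem_prod_iff] at hU
  obtain ⟨U₁, h₁, U₂, h₂, hU⟩ := hU
  obtain ⟨X₁, hX₁⟩ := of_mem_nhds_fun _ _ h₁
  obtain ⟨X₂, hX₂⟩ := of_mem_nhds_fun _ _ h₂
  refine ⟨X₁ ∪ X₂, fun p hp => hU ⟨hX₁ _ fun a ha b hb => ?_, hX₂ _ fun a ha b hb => ?_⟩⟩
  · exact (hp a (Finset.mem_union_left _ ha) b (Finset.mem_union_left _ hb)).1
  · exact (hp a (Finset.mem_union_right _ ha) b (Finset.mem_union_right _ hb)).2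

theorem AgreeOn.mono {X Y : Finset ℕ} {p q : 𝒩} (h : AgreeOn Y p q) (hXY : X ⊆ Y) :
    AgreeOn X p q :=
  fun a ha b hb => h a (hXY ha) b (hXY hb)

theorem dense_of_forall_agreeOn {U : Set ↥LatStr}
    (h : ∀ (q : ↥LatStr) (X : Finset ℕ), ∃ p ∈ U, AgreeOn X p.1 q.1) : Dense U := by
  rw [dense_iff_inter_open]
  rintro V hV ⟨q, hq⟩
  obtain ⟨W, hW, rfl⟩ := isOpen_induced_iff.1 hV
  obtain ⟨X, hX⟩ := exists_agreeOn_subset_of_mem_nhds (hW.mem_nhds hq)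
  obtain ⟨p, hpU, hp⟩ := h q X
  exact ⟨p, hX hp, hpU⟩

theorem isClopen_setOf_eval (a b : ℕ) (s : Set (ℕ × ℕ)) :
    IsClopen {p : 𝒩 | (p.1 a b, p.2 a b) ∈ s} :=
  (isClopen_discrete s).preimage (by fun_prop)

theorem isClopen_setOf_strEmb {A : Type} [Lattice A] [Finite A] (e : A → ℕ) :
    IsClopen {p | StrEmb A p e} := by
  have : {p | StrEmb A p e} = {_p | Injective e} ∩ ⋂ (a) (b),
      {p : 𝒩 | (p.1 (e a) (e b), p.2 (e a) (e b)) ∈ {x | e (a ⊔ b) = x.1 ∧ e (a ⊓ b) = x.2}} := by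
    ext p
    simp [StrEmb]
  rw [this]
  refine .inter ?_ (isClopen_iInter_of_finite fun a => isClopen_iInter_of_finite fun b =>
    isClopen_setOf_eval ..)
  by_cases he : Injective e <;> simp [he, isClopen_univ, isClopen_empty]

theorem exists_latStr_agreeOn_extending (q : ↥LatStr) (X : Finset ℕ) {A B : Type} [Lattice A]
    [Finite A] [Lattice B] [Finite B] {e : A → ℕ} (he : StrEmb A q.1 e) {j : A → B}
    (hj : IsLatticeEmbedding j) :
    ∃ p : ↥LatStr, AgreeOn X p.1 q.1 ∧ (∃ T : Finset ℕ, X ⊆ T ∧ StrClosed p.1 T) ∧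
      ∃ e' : B → ℕ, StrEmb B p.1 e' ∧ e' ∘ j = e := by
  let Y : Set ℕ := X ∪ image2 q.1.1 X X ∪ image2 q.1.2 X X ∪ range e
  have hXY : ↑X ⊆ Y := subset_union_left.trans (subset_union_left.trans subset_union_left)
  have hY : Y.Finite := by
    have := X.finite_toSet
    exact ((this.union (this.image2 _ this)).union (this.image2 _ this)).union (finite_range e)
  obtain ⟨p, hp, hpq, ⟨T, hYT, hT⟩, hext⟩ :=
    exists_latStr_extending q hY he subset_union_right hj
  refine ⟨⟨p, hp⟩, fun a ha b hb => ⟨(hpq a (hXY ha) b (hXY hb)).1 ?_,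
    (hpq a (hXY ha) b (hXY hb)).2 ?_⟩, ⟨T, Finset.coe_subset.1 (hXY.trans hYT), hT⟩, hext⟩
  · exact .inl (.inl (.inr (mem_image2_of_mem ha hb)))
  · exact .inl (.inr (mem_image2_of_mem ha hb))

def locFinSet (S : Finset ℕ) : Set ↥LatStr :=
  {p | ∃ T : Finset ℕ, S ⊆ T ∧ StrClosed p.1 T}

theorem isOpen_locFinSet (S : Finset ℕ) : IsOpen (locFinSet S) := by
  have : locFinSet S = Subtype.val ⁻¹' ⋃ (T : Finset ℕ) (_ : S ⊆ T), ⋂ a ∈ T, ⋂ b ∈ T,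
      {p : 𝒩 | (p.1 a b, p.2 a b) ∈ {x | x.1 ∈ T ∧ x.2 ∈ T}} := by
    ext p
    simp [locFinSet, StrClosed]
  rw [this]
  exact (isOpen_iUnion fun T => isOpen_iUnion fun _ => isOpen_biInter_finset fun a _ =>
    isOpen_biInter_finset fun b _ => (isClopen_setOf_eval a b _).isOpen).preimage
      continuous_subtype_val

theorem dense_locFinSet (S : Finset ℕ) : Dense (locFinSet S) := by
  refine dense_of_forall_agreeOn fun q X => ?_
  obtain ⟨p, hpq, ⟨T, hT, hTp⟩, -⟩ := exists_latStr_agreeOn_extending q (X ∪ S)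
    (e := (Empty.elim : Empty → ℕ)) ⟨injective_of_subsingleton _, fun a => a.elim⟩
    (j := id) ⟨injective_id, fun _ _ => ⟨rfl, rfl⟩⟩
  exact ⟨p, ⟨T, Finset.union_subset_right hT, hTp⟩, hpq.mono Finset.subset_union_left⟩

def extSet (A B : Type) [Lattice A] [Lattice B] (j : A → B) (e : A → ℕ) : Set ↥LatStr :=
  {p | StrEmb A p.1 e → ∃ e' : B → ℕ, StrEmb B p.1 e' ∧ e' ∘ j = e}

section extSet

variable {A B : Type} [Lattice A] [Finite A] [Lattice B] [Finite B]

theorem isOpen_extSet (j : A → B) (e : A → ℕ) : IsOpen (extSet A B j e) := by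
  have : extSet A B j e = Subtype.val ⁻¹'
      ({p | StrEmb A p e}ᶜ ∪ ⋃ (e' : B → ℕ) (_ : e' ∘ j = e), {p | StrEmb B p e'}) := by
    ext p
    simp [extSet, imp_iff_not_or, and_comm]
  rw [this]
  exact ((isClopen_setOf_strEmb e).compl.isOpen.union (isOpen_biUnion fun e' _ =>
    (isClopen_setOf_strEmb e').isOpen)).preimage continuous_subtype_val

theorem dense_extSet {j : A → B} (hj : IsLatticeEmbedding j) (e : A → ℕ) :
    Dense (extSet A B j e) := by
  refine dense_of_forall_agreeOn fun q X => ?_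
  by_cases he : StrEmb A q.1 e
  · obtain ⟨p, hpq, -, hext⟩ := exists_latStr_agreeOn_extending q X he hj
    exact ⟨p, fun _ => hext, hpq⟩
  · exact ⟨q, fun h => absurd h he, fun _ _ _ _ => ⟨rfl, rfl⟩⟩

end extSet

instance Lattice.instFinite {α : Type*} [Finite α] : Finite (Lattice α) :=
  Finite.of_injective (fun L : Lattice α => fun x y : α => L.le x y) fun _ _ h =>
    Lattice.ext fun x y => iff_of_eq (congrFun₂ h x y)

structure FinExt (n m : ℕ) where
  latA : Lattice (Fin n)
  latB : Lattice (Fin m)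
  j : Fin n → Fin m
  e : Fin n → ℕ
  isLatticeEmbedding_j : @IsLatticeEmbedding _ _ latA latB j

namespace FinExt

instance (n m : ℕ) : Countable (FinExt n m) :=
  Function.Injective.countable (f := fun P => (P.latA, P.latB, P.j, P.e)) <| by
    rintro ⟨⟩ ⟨⟩ h
    simp only [Prod.mk.injEq] at h
    obtain ⟨rfl, rfl, rfl, rfl⟩ := h
    rfl

variable {n m : ℕ}

def extSet (P : FinExt n m) : Set ↥LatStr := @_root_.extSet _ _ P.latA P.latB P.j P.e

theorem isOpen_extSet (P : FinExt n m) : IsOpen P.extSet :=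
  @_root_.isOpen_extSet _ _ P.latA _ P.latB _ P.j P.e

theorem dense_extSet (P : FinExt n m) : Dense P.extSet :=
  @_root_.dense_extSet _ _ P.latA _ P.latB _ P.j P.isLatticeEmbedding_j P.e

end FinExt

theorem Equiv.isLatticeEmbedding_lattice {α β : Type*} [Lattice β] (σ : α ≃ β) :
    @IsLatticeEmbedding _ _ σ.lattice _ σ :=
  ⟨σ.injective, fun _ _ => ⟨σ.apply_symm_apply _, σ.apply_symm_apply _⟩⟩

theorem Equiv.isLatticeEmbedding_symm_lattice {α β : Type*} [Lattice β] (σ : α ≃ β) :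
    @IsLatticeEmbedding _ _ _ σ.lattice σ.symm := by
  let _ := σ.lattice
  have hσ := σ.isLatticeEmbedding_lattice
  exact ⟨σ.symm.injective, fun b b' => ⟨σ.injective (by simp [(hσ.2 _ _).1]),
    σ.injective (by simp [(hσ.2 _ _).2])⟩⟩

theorem ultraStr_of_forall_mem_extSet {p : ↥LatStr} (h : ∀ n m (P : FinExt n m), p ∈ P.extSet) :
    UltraStr p.1 := by
  intro A B _ _ _ _ j e hj he
  let σA := Fintype.equivFin A
  let σB := Fintype.equivFin B
  let _ : Lattice (Fin _) := σA.symm.lattice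
  let _ : Lattice (Fin _) := σB.symm.lattice
  have hσA := σA.symm.isLatticeEmbedding_lattice
  have hσB := σB.symm.isLatticeEmbedding_symm_lattice
  obtain ⟨e', he', hcomm⟩ := h _ _ ⟨_, _, σB ∘ j ∘ σA.symm, e ∘ σA.symm,
    hσB.comp (IsLatticeEmbedding.comp hj hσA)⟩ (he.comp hσA)
  refine ⟨e' ∘ σB, he'.comp hσB, funext fun a => ?_⟩
  simpa using congrFun hcomm (σA a)

theorem univStr_of_ultraStr {p : 𝒩} (h : UltraStr p) : UnivStr p := fun A _ _ =>
  let ⟨e, he, _⟩ := h Empty A Empty.elim Empty.elim ⟨injective_of_subsingleton _, fun a => a.elim⟩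
    ⟨injective_of_subsingleton _, fun a => a.elim⟩
  ⟨e, he⟩

/-- The set of lattice structures on `ℕ` that are locally finite, universal for finite
lattices, and ultrahomogeneous for finite lattices is comeager in `LatStr`. -/
theorem locFin_univ_ultra_comeager :
    {p : LatStr | LocFinStr p.1 ∧ UnivStr p.1 ∧ UltraStr p.1} ∈ residual LatStr := by
  have hloc : (⋂ S, locFinSet S) ∈ residual ↥LatStr := countable_iInter_mem.2 fun S =>
    residual_of_dense_open (isOpen_locFinSet S) (dense_locFinSet S)
  have hext : (⋂ (n) (m) (P : FinExt n m), P.extSet) ∈ residual ↥LatStr :=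
    countable_iInter_mem.2 fun n => countable_iInter_mem.2 fun m => countable_iInter_mem.2
      fun P => residual_of_dense_open P.isOpen_extSet P.dense_extSet
  filter_upwards [hloc, hext] with p hp_loc hp_ext
  simp only [mem_iInter] at hp_loc hp_ext
  have hultra := ultraStr_of_forall_mem_extSet hp_ext
  exact ⟨hp_loc, univStr_of_ultraStr hultra, hultra⟩
end

section
/- The set of all (s, i) ∈ LatStr such that the lattice (ℕ, s, i) is locally finite is the intersection of countably many dense open subsets of LatStr; in particular, it is comeager in LatStr. -/
namespace LocFinAux

/-- Type synonym for `ℕ` carrying the lattice structure of `P`. -/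
def Mdl (_P : ↥LatStr) : Type := ℕ

variable (P : ↥LatStr)

instance : Max (Mdl P) := ⟨P.1.1⟩
instance : Min (Mdl P) := ⟨P.1.2⟩
instance : DecidableEq (Mdl P) := inferInstanceAs (DecidableEq ℕ)

instance : Lattice (Mdl P) :=
  Lattice.mk' P.2.1 P.2.2.1 P.2.2.2.1 P.2.2.2.2.1
    (fun a b => P.2.2.2.2.2.1 a b) (fun a b => P.2.2.2.2.2.2 a b)

instance : DecidableRel (α := Mdl P) (· ≤ ·) :=
  fun a b => decidable_of_iff (a ⊔ b = b) sup_eq_right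

def toM (n : ℕ) : Mdl P := n
def ofM (a : Mdl P) : ℕ := a

@[simp] lemma ofM_toM (n : ℕ) : ofM P (toM P n) = n := rfl
@[simp] lemma toM_ofM (a : Mdl P) : toM P (ofM P a) = a := rfl

lemma sup_def (a b : Mdl P) : a ⊔ b = toM P (P.1.1 (ofM P a) (ofM P b)) := rfl
lemma inf_def (a b : Mdl P) : a ⊓ b = toM P (P.1.2 (ofM P a) (ofM P b)) := rfl

variable (B : Finset (Mdl P)) (hB : B.Nonempty)

/-- top element of the generated finite meet-closed set -/
def tp : Mdl P := B.sup' hB id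

def B0 : Finset (Mdl P) := insert (tp P B hB) B

/-- the set of meets of nonempty subsets of `B0` : a finite meet-closed set with top. -/
def M : Finset (Mdl P) :=
  ((B0 P B hB).powerset.filter (fun t => t.Nonempty)).attach.image
    (fun t => t.1.inf' (Finset.mem_filter.mp t.2).2 id)

lemma B0_subset_M : B0 P B hB ⊆ M P B hB := by
  intro b hb
  refine Finset.mem_image.mpr ⟨⟨{b}, ?_⟩, Finset.mem_attach _ _, ?_⟩
  · simp [Finset.mem_filter, Finset.mem_powerset, Finset.singleton_subset_iff, hb]
  · simp

lemma tp_mem_M : tp P B hB ∈ M P B hB :=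
  B0_subset_M P B hB (Finset.mem_insert_self _ _)

lemma le_tp : ∀ m ∈ M P B hB, m ≤ tp P B hB := by
  intro m hm
  obtain ⟨⟨t, ht⟩, -, rfl⟩ := Finset.mem_image.mp hm
  obtain ⟨htsub, x, hx⟩ := Finset.mem_filter.mp ht
  refine le_trans (Finset.inf'_le id hx) ?_
  have hxB0 : x ∈ B0 P B hB := Finset.mem_powerset.mp htsub hx
  rcases Finset.mem_insert.mp hxB0 with h | h
  · exact le_of_eq h
  · exact Finset.le_sup' id h

lemma inf_mem_M : ∀ a ∈ M P B hB, ∀ b ∈ M P B hB, a ⊓ b ∈ M P B hB := by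
  intro a ha b hb
  obtain ⟨⟨t₁, ht₁⟩, -, rfl⟩ := Finset.mem_image.mp ha
  obtain ⟨⟨t₂, ht₂⟩, -, rfl⟩ := Finset.mem_image.mp hb
  obtain ⟨ht₁sub, h₁⟩ := Finset.mem_filter.mp ht₁
  obtain ⟨ht₂sub, h₂⟩ := Finset.mem_filter.mp ht₂
  have hu : t₁ ∪ t₂ ∈ (B0 P B hB).powerset.filter (fun t => t.Nonempty) := by
    refine Finset.mem_filter.mpr ⟨Finset.mem_powerset.mpr ?_, h₁.mono Finset.subset_union_left⟩
    exact Finset.union_subset (Finset.mem_powerset.mp ht₁sub) (Finset.mem_powerset.mp ht₂sub)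
  refine Finset.mem_image.mpr ⟨⟨t₁ ∪ t₂, hu⟩, Finset.mem_attach _ _, ?_⟩
  exact (Finset.inf'_union h₁ h₂ id).symm ▸ rfl

/-- upper bounds of `a` and `b` inside `M` -/
def ub (a b : Mdl P) : Finset (Mdl P) :=
  (M P B hB).filter (fun c => a ≤ c ∧ b ≤ c)

lemma tp_mem_ub {a b : Mdl P} (ha : a ∈ M P B hB) (hb : b ∈ M P B hB) :
    tp P B hB ∈ ub P B hB a b :=
  Finset.mem_filter.mpr ⟨tp_mem_M P B hB, le_tp P B hB a ha, le_tp P B hB b hb⟩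

lemma ub_nonempty {a b : Mdl P} (ha : a ∈ M P B hB) (hb : b ∈ M P B hB) :
    (ub P B hB a b).Nonempty := ⟨_, tp_mem_ub P B hB ha hb⟩

/-- the join within `M` -/
def jn (a b : Mdl P) : Mdl P :=
  if h : (ub P B hB a b).Nonempty then (ub P B hB a b).inf' h id else a

variable {P B hB}

lemma jn_mem {a b : Mdl P} (ha : a ∈ M P B hB) (hb : b ∈ M P B hB) :
    jn P B hB a b ∈ M P B hB := by
  rw [jn, dif_pos (ub_nonempty P B hB ha hb)]
  exact Finset.inf'_mem _ (inf_mem_M P B hB) _ _ _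
    (fun c hc => (Finset.mem_filter.mp hc).1)

lemma le_jn_left {a b : Mdl P} (ha : a ∈ M P B hB) (hb : b ∈ M P B hB) :
    a ≤ jn P B hB a b := by
  rw [jn, dif_pos (ub_nonempty P B hB ha hb)]
  exact Finset.le_inf' _ _ (fun c hc => (Finset.mem_filter.mp hc).2.1)

lemma le_jn_right {a b : Mdl P} (ha : a ∈ M P B hB) (hb : b ∈ M P B hB) :
    b ≤ jn P B hB a b := by
  rw [jn, dif_pos (ub_nonempty P B hB ha hb)]
  exact Finset.le_inf' _ _ (fun c hc => (Finset.mem_filter.mp hc).2.2)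

lemma jn_le {a b c : Mdl P} (ha : a ∈ M P B hB) (hb : b ∈ M P B hB)
    (hc : c ∈ M P B hB) (h1 : a ≤ c) (h2 : b ≤ c) : jn P B hB a b ≤ c := by
  rw [jn, dif_pos (ub_nonempty P B hB ha hb)]
  exact Finset.inf'_le id (Finset.mem_filter.mpr ⟨hc, h1, h2⟩)

lemma jn_comm {a b : Mdl P} (ha : a ∈ M P B hB) (hb : b ∈ M P B hB) :
    jn P B hB a b = jn P B hB b a :=
  le_antisymm
    (jn_le ha hb (jn_mem hb ha) (le_jn_right hb ha) (le_jn_left hb ha))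
    (jn_le hb ha (jn_mem ha hb) (le_jn_right ha hb) (le_jn_left ha hb))

lemma jn_idem {a : Mdl P} (ha : a ∈ M P B hB) : jn P B hB a a = a :=
  le_antisymm (jn_le ha ha ha le_rfl le_rfl) (le_jn_left ha ha)

lemma jn_assoc {a b c : Mdl P} (ha : a ∈ M P B hB) (hb : b ∈ M P B hB)
    (hc : c ∈ M P B hB) :
    jn P B hB (jn P B hB a b) c = jn P B hB a (jn P B hB b c) := by
  have hab := jn_mem ha hb
  have hbc := jn_mem hb hc
  have h1 := jn_mem hab hc
  have h2 := jn_mem ha hbc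
  refine le_antisymm (jn_le hab hc h2 ?_ ?_) (jn_le ha hbc h1 ?_ ?_)
  · exact jn_le ha hb h2 (le_jn_left ha hbc)
      (le_trans (le_jn_left hb hc) (le_jn_right ha hbc))
  · exact le_trans (le_jn_right hb hc) (le_jn_right ha hbc)
  · exact le_trans (le_jn_left ha hb) (le_jn_left hab hc)
  · exact jn_le hb hc h1 (le_trans (le_jn_right ha hb) (le_jn_left hab hc))
      (le_jn_right hab hc)

lemma jn_eq_sup {a b : Mdl P} (ha : a ∈ M P B hB) (hb : b ∈ M P B hB)
    (hs : a ⊔ b ∈ M P B hB) : jn P B hB a b = a ⊔ b :=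
  le_antisymm (jn_le ha hb hs le_sup_left le_sup_right)
    (sup_le (le_jn_left ha hb) (le_jn_right ha hb))

lemma jn_inf_absorb {a b : Mdl P} (ha : a ∈ M P B hB) (hb : b ∈ M P B hB) :
    jn P B hB a (a ⊓ b) = a :=
  le_antisymm (jn_le ha (inf_mem_M P B hB a ha b hb) ha le_rfl inf_le_left)
    (le_jn_left ha (inf_mem_M P B hB a ha b hb))

lemma inf_jn_absorb {a b : Mdl P} (ha : a ∈ M P B hB) (hb : b ∈ M P B hB) :
    a ⊓ jn P B hB a b = a :=
  inf_eq_left.mpr (le_jn_left ha hb)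

variable (P B hB)

/-- The join of the perturbed lattice: `M` with the rest of `ℕ` as a chain on top. -/
def qs (a b : Mdl P) : Mdl P :=
  if a ∈ M P B hB then (if b ∈ M P B hB then jn P B hB a b else b)
  else (if b ∈ M P B hB then a else toM P (max (ofM P a) (ofM P b)))

/-- The meet of the perturbed lattice. -/
def qi (a b : Mdl P) : Mdl P :=
  if a ∈ M P B hB then (if b ∈ M P B hB then a ⊓ b else a)
  else (if b ∈ M P B hB then b else toM P (min (ofM P a) (ofM P b)))

/-- The perturbed lattice structure, as a point of the ambient product space. -/
def q : (ℕ → ℕ → ℕ) × (ℕ → ℕ → ℕ) :=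
  (fun a b => ofM P (qs P B hB (toM P a) (toM P b)),
   fun a b => ofM P (qi P B hB (toM P a) (toM P b)))

variable {P B hB}

lemma max_not_mem {a b : Mdl P} (ha : a ∉ M P B hB) (hb : b ∉ M P B hB) :
    toM P (max (ofM P a) (ofM P b)) ∉ M P B hB := by
  rcases max_choice (ofM P a) (ofM P b) with h | h <;> rw [h]
  · simpa using ha
  · simpa using hb

lemma min_not_mem {a b : Mdl P} (ha : a ∉ M P B hB) (hb : b ∉ M P B hB) :
    toM P (min (ofM P a) (ofM P b)) ∉ M P B hB := by
  rcases min_choice (ofM P a) (ofM P b) with h | h <;> rw [h]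
  · simpa using ha
  · simpa using hb


lemma qs_MM {a b : Mdl P} (hA : a ∈ M P B hB) (hBb : b ∈ M P B hB) :
    qs P B hB a b = jn P B hB a b := by unfold qs; rw [if_pos hA, if_pos hBb]

lemma qs_Mc {a b : Mdl P} (hA : a ∈ M P B hB) (hBb : b ∉ M P B hB) :
    qs P B hB a b = b := by unfold qs; rw [if_pos hA, if_neg hBb]

lemma qs_cM {a b : Mdl P} (hA : a ∉ M P B hB) (hBb : b ∈ M P B hB) :
    qs P B hB a b = a := by unfold qs; rw [if_neg hA, if_pos hBb]

lemma qs_cc {a b : Mdl P} (hA : a ∉ M P B hB) (hBb : b ∉ M P B hB) :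
    qs P B hB a b = toM P (max (ofM P a) (ofM P b)) := by
  unfold qs; rw [if_neg hA, if_neg hBb]

lemma qi_MM {a b : Mdl P} (hA : a ∈ M P B hB) (hBb : b ∈ M P B hB) :
    qi P B hB a b = a ⊓ b := by unfold qi; rw [if_pos hA, if_pos hBb]

lemma qi_Mc {a b : Mdl P} (hA : a ∈ M P B hB) (hBb : b ∉ M P B hB) :
    qi P B hB a b = a := by unfold qi; rw [if_pos hA, if_neg hBb]

lemma qi_cM {a b : Mdl P} (hA : a ∉ M P B hB) (hBb : b ∈ M P B hB) :
    qi P B hB a b = b := by unfold qi; rw [if_neg hA, if_pos hBb]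

lemma qi_cc {a b : Mdl P} (hA : a ∉ M P B hB) (hBb : b ∉ M P B hB) :
    qi P B hB a b = toM P (min (ofM P a) (ofM P b)) := by
  unfold qi; rw [if_neg hA, if_neg hBb]

lemma qs_comm (a b : Mdl P) : qs P B hB a b = qs P B hB b a := by
  unfold qs
  by_cases ha : a ∈ M P B hB <;> by_cases hb : b ∈ M P B hB <;>
    simp only [ha, hb, if_pos, if_neg, if_true, if_false]
  · exact jn_comm ha hb
  · exact congrArg (toM P) (Nat.max_comm _ _)

lemma qi_comm (a b : Mdl P) : qi P B hB a b = qi P B hB b a := by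
  unfold qi
  by_cases ha : a ∈ M P B hB <;> by_cases hb : b ∈ M P B hB <;>
    simp only [ha, hb, if_pos, if_neg, if_true, if_false]
  · exact inf_comm a b
  · exact congrArg (toM P) (Nat.min_comm _ _)

lemma qs_assoc (a b c : Mdl P) :
    qs P B hB (qs P B hB a b) c = qs P B hB a (qs P B hB b c) := by
  by_cases ha : a ∈ M P B hB <;> by_cases hb : b ∈ M P B hB <;>
      by_cases hc : c ∈ M P B hB
  · -- MMM
    simp only [qs, ha, hb, hc, jn_mem ha hb, jn_mem hb hc, if_true]
    exact jn_assoc ha hb hc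
  · -- MMc
    simp only [qs, ha, hb, hc, jn_mem ha hb, if_true, if_false]
  · -- McM
    simp only [qs, ha, hb, hc, if_true, if_false]
  · -- Mcc
    simp only [qs, ha, hb, hc, max_not_mem hb hc, if_true, if_false]
  · -- cMM
    simp only [qs, ha, hb, hc, jn_mem hb hc, if_true, if_false]
  · -- cMc
    simp only [qs, ha, hb, hc, if_true, if_false]
  · -- ccM
    simp only [qs, ha, hb, hc, max_not_mem ha hb, if_true, if_false]
  · -- ccc
    simp only [qs, ha, hb, hc, max_not_mem ha hb, max_not_mem hb hc, if_false]
    exact congrArg (toM P) (Nat.max_assoc _ _ _)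

lemma qi_assoc (a b c : Mdl P) :
    qi P B hB (qi P B hB a b) c = qi P B hB a (qi P B hB b c) := by
  by_cases ha : a ∈ M P B hB <;> by_cases hb : b ∈ M P B hB <;>
      by_cases hc : c ∈ M P B hB
  · -- MMM
    simp only [qi, ha, hb, hc, inf_mem_M P B hB a ha b hb, inf_mem_M P B hB b hb c hc, if_true]
    exact inf_assoc a b c
  · -- MMc
    simp only [qi, ha, hb, hc, inf_mem_M P B hB a ha b hb, if_true, if_false]
  · -- McM
    simp only [qi, ha, hb, hc, if_true, if_false]
  · -- Mcc
    simp only [qi, ha, hb, hc, min_not_mem hb hc, if_true, if_false]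
  · -- cMM
    simp only [qi, ha, hb, hc, inf_mem_M P B hB b hb c hc, if_true, if_false]
  · -- cMc
    simp only [qi, ha, hb, hc, if_true, if_false]
  · -- ccM
    simp only [qi, ha, hb, hc, min_not_mem ha hb, if_true, if_false]
  · -- ccc
    simp only [qi, ha, hb, hc, min_not_mem ha hb, min_not_mem hb hc, if_false]
    exact congrArg (toM P) (Nat.min_assoc _ _ _)

lemma qs_qi_absorb (a b : Mdl P) : qs P B hB a (qi P B hB a b) = a := by
  by_cases ha : a ∈ M P B hB <;> by_cases hb : b ∈ M P B hB
  · rw [qi_MM ha hb, qs_MM ha (inf_mem_M P B hB a ha b hb)]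
    exact jn_inf_absorb ha hb
  · rw [qi_Mc ha hb, qs_MM ha ha]
    exact jn_idem ha
  · rw [qi_cM ha hb, qs_cM ha hb]
  · rw [qi_cc ha hb, qs_cc ha (min_not_mem ha hb), ofM_toM,
      max_eq_left (min_le_left _ _)]
    exact toM_ofM P a

lemma qi_qs_absorb (a b : Mdl P) : qi P B hB a (qs P B hB a b) = a := by
  by_cases ha : a ∈ M P B hB <;> by_cases hb : b ∈ M P B hB
  · rw [qs_MM ha hb, qi_MM ha (jn_mem ha hb)]
    exact inf_jn_absorb ha hb
  · rw [qs_Mc ha hb, qi_Mc ha hb]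
  · rw [qs_cM ha hb, qi_cc ha ha, min_self]
    exact toM_ofM P a
  · rw [qs_cc ha hb, qi_cc ha (max_not_mem ha hb), ofM_toM,
      min_eq_left (le_max_left _ _)]
    exact toM_ofM P a

set_option maxHeartbeats 1000000 in
lemma q_mem_LatStr : q P B hB ∈ LatStr := by
  refine ⟨fun a b => congrArg (ofM P) (qs_comm _ _),
    fun a b c => ?_, fun a b => congrArg (ofM P) (qi_comm _ _),
    fun a b c => ?_, fun a b => congrArg (ofM P) ?_, fun a b => congrArg (ofM P) ?_⟩
  · exact congrArg (ofM P) (qs_assoc (toM P a) (toM P b) (toM P c))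
  · exact congrArg (ofM P) (qi_assoc (toM P a) (toM P b) (toM P c))
  · exact qs_qi_absorb (toM P a) (toM P b)
  · exact qi_qs_absorb (toM P a) (toM P b)

lemma toM_mem_image {x : ℕ} :
    x ∈ (M P B hB).image (ofM P) ↔ toM P x ∈ M P B hB := by
  constructor
  · intro hx
    obtain ⟨m, hm, rfl⟩ := Finset.mem_image.mp hx
    exact hm
  · intro hx; exact Finset.mem_image.mpr ⟨toM P x, hx, rfl⟩

/-- the perturbed structure is locally finite -/
lemma q_locFin : LocFinStr (q P B hB) := by
  intro S
  refine ⟨(M P B hB).image (ofM P) ∪ S, Finset.subset_union_right, ?_⟩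
  intro a haT b hbT
  have q1 : (q P B hB).1 a b = ofM P (qs P B hB (toM P a) (toM P b)) := rfl
  have q2 : (q P B hB).2 a b = ofM P (qi P B hB (toM P a) (toM P b)) := rfl
  by_cases hA : toM P a ∈ M P B hB <;> by_cases hBb : toM P b ∈ M P B hB
  · constructor
    · rw [q1, qs_MM hA hBb]
      exact Finset.mem_union_left _ (Finset.mem_image.mpr ⟨_, jn_mem hA hBb, rfl⟩)
    · rw [q2, qi_MM hA hBb]
      exact Finset.mem_union_left _
        (Finset.mem_image.mpr ⟨_, inf_mem_M P B hB _ hA _ hBb, rfl⟩)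
  · have hbS : b ∈ S :=
      (Finset.mem_union.mp hbT).resolve_left fun h => hBb (toM_mem_image.mp h)
    constructor
    · rw [q1, qs_Mc hA hBb]
      exact Finset.mem_union_right _ hbS
    · rw [q2, qi_Mc hA hBb]
      exact haT
  · have haS : a ∈ S :=
      (Finset.mem_union.mp haT).resolve_left fun h => hA (toM_mem_image.mp h)
    constructor
    · rw [q1, qs_cM hA hBb]
      exact haT
    · rw [q2, qi_cM hA hBb]
      exact hbT
  · constructor
    · rw [q1, qs_cc hA hBb]
      show max a b ∈ _
      rcases max_choice a b with h | h <;> rw [h] <;> assumption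
    · rw [q2, qi_cc hA hBb]
      show min a b ∈ _
      rcases min_choice a b with h | h <;> rw [h] <;> assumption

end LocFinAux

section Topology

open LocFinAux Filter Set Topology

/-- basic neighborhoods in `ℕ → ℕ → ℕ` -/
lemma cylinder_subset_nhds (f : ℕ → ℕ → ℕ) {W : Set (ℕ → ℕ → ℕ)} (hW : W ∈ 𝓝 f) :
    ∃ k, {g : ℕ → ℕ → ℕ | ∀ a < k, ∀ b < k, g a b = f a b} ⊆ W := by
  rw [nhds_pi, Filter.mem_pi'] at hW
  obtain ⟨I, t, ht, hsub⟩ := hW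
  have inner : ∀ a : ℕ, ∃ k : ℕ, {g : ℕ → ℕ | ∀ b < k, g b = f a b} ⊆ t a := by
    intro a
    have := ht a
    rw [nhds_pi, Filter.mem_pi'] at this
    obtain ⟨J, u, hu, husub⟩ := this
    refine ⟨(J.sup id) + 1, fun g hg => husub fun b hb => ?_⟩
    have hbJ : b < J.sup id + 1 := Nat.lt_succ_of_le (Finset.le_sup (f := id) hb)
    rw [hg b hbJ]
    have := hu b
    rwa [nhds_discrete, Filter.mem_pure] at this
  choose ka hka using inner
  refine ⟨(I.sup fun a => max (a + 1) (ka a)), fun g hg => hsub fun a haI => ?_⟩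
  have hs : max (a + 1) (ka a) ≤ I.sup fun x => max (x + 1) (ka x) :=
    Finset.le_sup (f := fun x => max (x + 1) (ka x)) haI
  have h1 : a + 1 ≤ I.sup fun x => max (x + 1) (ka x) :=
    le_trans (le_max_left _ _) hs
  have h2 : ka a ≤ I.sup fun x => max (x + 1) (ka x) :=
    le_trans (le_max_right _ _) hs
  exact hka a fun b hb => hg a (Nat.lt_of_succ_le h1) b (lt_of_lt_of_le hb h2)

lemma cylinder_subset_nhds_prod (p : (ℕ → ℕ → ℕ) × (ℕ → ℕ → ℕ))
    {W : Set ((ℕ → ℕ → ℕ) × (ℕ → ℕ → ℕ))} (hW : W ∈ 𝓝 p) :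
    ∃ k, {q : (ℕ → ℕ → ℕ) × (ℕ → ℕ → ℕ) |
      ∀ a < k, ∀ b < k, q.1 a b = p.1 a b ∧ q.2 a b = p.2 a b} ⊆ W := by
  rw [nhds_prod_eq, Filter.mem_prod_iff] at hW
  obtain ⟨W1, hW1, W2, hW2, hsub⟩ := hW
  obtain ⟨k1, hk1⟩ := cylinder_subset_nhds p.1 hW1
  obtain ⟨k2, hk2⟩ := cylinder_subset_nhds p.2 hW2
  refine ⟨max k1 k2, fun q hq => hsub ⟨?_, ?_⟩⟩
  · exact hk1 fun a ha b hb =>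
      (hq a (lt_of_lt_of_le ha (le_max_left _ _)) b (lt_of_lt_of_le hb (le_max_left _ _))).1
  · exact hk2 fun a ha b hb =>
      (hq a (lt_of_lt_of_le ha (le_max_right _ _)) b (lt_of_lt_of_le hb (le_max_right _ _))).2

/-- the ambient open set -/
def V (n : ℕ) : Set ((ℕ → ℕ → ℕ) × (ℕ → ℕ → ℕ)) :=
  {p | ∃ T : Finset ℕ, Finset.range n ⊆ T ∧ ∀ a ∈ T, ∀ b ∈ T, p.1 a b ∈ T ∧ p.2 a b ∈ T}

lemma isOpen_V (n : ℕ) : IsOpen (V n) := by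
  rw [isOpen_iff_mem_nhds]
  rintro p ⟨T, hTn, hTcl⟩
  have hC : IsOpen {q : (ℕ → ℕ → ℕ) × (ℕ → ℕ → ℕ) |
      ∀ a ∈ T, ∀ b ∈ T, q.1 a b = p.1 a b ∧ q.2 a b = p.2 a b} := by
    have : {q : (ℕ → ℕ → ℕ) × (ℕ → ℕ → ℕ) |
        ∀ a ∈ T, ∀ b ∈ T, q.1 a b = p.1 a b ∧ q.2 a b = p.2 a b} =
        ⋂ a ∈ T, ⋂ b ∈ T,
          ({q : (ℕ → ℕ → ℕ) × (ℕ → ℕ → ℕ) | q.1 a b = p.1 a b} ∩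
           {q | q.2 a b = p.2 a b}) := by
      ext q; simp [Set.mem_iInter]
    rw [this]
    refine isOpen_biInter_finset fun a _ => isOpen_biInter_finset fun b _ => ?_
    have c1 : Continuous fun q : (ℕ → ℕ → ℕ) × (ℕ → ℕ → ℕ) => q.1 a b := by
      exact (continuous_apply b).comp ((continuous_apply a).comp continuous_fst)
    have c2 : Continuous fun q : (ℕ → ℕ → ℕ) × (ℕ → ℕ → ℕ) => q.2 a b := by
      exact (continuous_apply b).comp ((continuous_apply a).comp continuous_snd)
    exact (IsOpen.preimage c1 (isOpen_discrete {p.1 a b})).inter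
      (IsOpen.preimage c2 (isOpen_discrete {p.2 a b}))
  refine Filter.mem_of_superset (hC.mem_nhds fun a ha b hb => ⟨rfl, rfl⟩) ?_
  intro q hq
  refine ⟨T, hTn, fun a ha b hb => ?_⟩
  obtain ⟨h1, h2⟩ := hq a ha b hb
  rw [h1, h2]
  exact hTcl a ha b hb

/-- the dense open sets -/
def U (n : ℕ) : Set ↥LatStr := Subtype.val ⁻¹' V n

lemma isOpen_U (n : ℕ) : IsOpen (U n) :=
  (isOpen_V n).preimage continuous_subtype_val

lemma dense_U (n : ℕ) : Dense (U n) := by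
  intro P
  rw [mem_closure_iff_nhds]
  intro t ht
  rw [nhds_induced, Filter.mem_comap] at ht
  obtain ⟨W, hW, hWt⟩ := ht
  obtain ⟨k, hk⟩ := cylinder_subset_nhds_prod _ hW
  obtain ⟨K, hKk, hKn, hK0⟩ : ∃ K : ℕ, k ≤ K ∧ n ≤ K ∧ 0 < K :=
    ⟨max k n + 1, le_trans (le_max_left _ _) (Nat.le_succ _),
      le_trans (le_max_right _ _) (Nat.le_succ _), Nat.succ_pos _⟩
  obtain ⟨Bn, hBnK, hBns, hBni⟩ :
      ∃ Bn : Finset ℕ, (∀ x < K, x ∈ Bn) ∧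
        (∀ a < K, ∀ b < K, P.1.1 a b ∈ Bn) ∧ (∀ a < K, ∀ b < K, P.1.2 a b ∈ Bn) := by
    refine ⟨(Finset.range K ∪
        (Finset.range K ×ˢ Finset.range K).image (fun ab => P.1.1 ab.1 ab.2)) ∪
        (Finset.range K ×ˢ Finset.range K).image (fun ab => P.1.2 ab.1 ab.2),
      fun x hx => Finset.mem_union_left _
        (Finset.mem_union_left _ (Finset.mem_range.mpr hx)), ?_, ?_⟩
    · intro a ha b hb
      refine Finset.mem_union_left _ (Finset.mem_union_right _ ?_)
      exact Finset.mem_image.mpr ⟨(a, b),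
        Finset.mem_product.mpr ⟨Finset.mem_range.mpr ha, Finset.mem_range.mpr hb⟩, rfl⟩
    · intro a ha b hb
      refine Finset.mem_union_right _ ?_
      exact Finset.mem_image.mpr ⟨(a, b),
        Finset.mem_product.mpr ⟨Finset.mem_range.mpr ha, Finset.mem_range.mpr hb⟩, rfl⟩
  clear hW
  set B : Finset (Mdl P) := Bn.image (toM P) with hBdef
  have hB : B.Nonempty := ⟨toM P 0, Finset.mem_image.mpr ⟨0, hBnK 0 hK0, rfl⟩⟩
  have hBM : ∀ x ∈ Bn, toM P x ∈ LocFinAux.M P B hB := by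
    intro x hx
    exact B0_subset_M P B hB
      (Finset.mem_insert_of_mem (Finset.mem_image.mpr ⟨x, hx, rfl⟩))
  -- agreement with P on the cylinder
  have hagree : ∀ a < K, ∀ b < K,
      (q P B hB).1 a b = P.1.1 a b ∧ (q P B hB).2 a b = P.1.2 a b := by
    intro a ha b hb
    have hA : toM P a ∈ LocFinAux.M P B hB := hBM a (hBnK a ha)
    have hBb : toM P b ∈ LocFinAux.M P B hB := hBM b (hBnK b hb)
    constructor
    · have hsM : toM P a ⊔ toM P b ∈ LocFinAux.M P B hB := by
        rw [sup_def, ofM_toM, ofM_toM]; exact hBM _ (hBns a ha b hb)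
      show ofM P (qs P B hB (toM P a) (toM P b)) = P.1.1 a b
      rw [qs_MM hA hBb, jn_eq_sup hA hBb hsM]
      simp only [sup_def, ofM_toM]
    · show ofM P (qi P B hB (toM P a) (toM P b)) = P.1.2 a b
      rw [qi_MM hA hBb]
      simp only [inf_def, ofM_toM]
  have hqW : q P B hB ∈ W := by
    refine hk fun a ha b hb => hagree a ?_ b ?_
    · exact lt_of_lt_of_le ha hKk
    · exact lt_of_lt_of_le hb hKk
  have hqLat : q P B hB ∈ LatStr := q_mem_LatStr
  have hqU : (⟨q P B hB, hqLat⟩ : ↥LatStr) ∈ U n := by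
    obtain ⟨T, hT1, hT2⟩ := q_locFin (P := P) (B := B) (hB := hB) (Finset.range n)
    exact ⟨T, hT1, hT2⟩
  exact ⟨⟨q P B hB, hqLat⟩, hWt hqW, hqU⟩

end Topology

/-- The set of locally finite lattice structures on `ℕ` is a countable intersection
of dense open subsets of `LatStr`; in particular it is comeager in `LatStr`. -/
theorem locallyFinite_GdeltaDense :
    (∃ U : ℕ → Set LatStr,
        (∀ n, IsOpen (U n)) ∧ (∀ n, Dense (U n)) ∧
        {p : LatStr | LocFinStr p.1} = ⋂ n, U n) ∧
      {p : LatStr | LocFinStr p.1} ∈ residual LatStr := by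
  have hEq : {p : LatStr | LocFinStr p.1} = ⋂ n, U n := by
    ext P
    simp only [Set.mem_setOf_eq, Set.mem_iInter]
    constructor
    · intro h n
      obtain ⟨T, hT1, hT2⟩ := h (Finset.range n)
      exact ⟨T, hT1, hT2⟩
    · intro h S
      obtain ⟨T, hT1, hT2⟩ := h (S.sup id + 1)
      refine ⟨T, fun s hs => hT1 ?_, hT2⟩
      exact Finset.mem_range.mpr (Nat.lt_succ_of_le (Finset.le_sup (f := id) hs))
  refine ⟨⟨U, isOpen_U, dense_U, hEq⟩, ?_⟩
  rw [hEq]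
  exact countable_iInter_mem.mpr fun n => residual_of_dense_open (isOpen_U n) (dense_U n)
end

section
/- The variety of lattices has the finite embeddability property: for every lattice L and every finite subset S ⊆ L, there exist a finite lattice K and an injective map f : S → K such that for all a, b, c ∈ S one has a ⊔ b = c if and only if f a ⊔ f b = f c, and a ⊓ b = c if and only if f a ⊓ f b = f c. -/
/-!
Let `T := S ∪ {a ⊔ b | a, b ∈ S}` and send `a ∈ L` to the formal concept it generates for the
relation `x ≤ u` between `x ∈ L` and `u ∈ T`. The concept lattice is finite because a concept is
determined by its intent, a subset of `T`. The intent of the concept of `a` is `{u ∈ T | a ≤ u}`,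
so the map preserves binary joins; for `a ∈ T` its extent is `Iic a`, so on `T` the map is
injective and meets of concepts (intersections of extents) match meets in `L`. Since `T` contains
`S` and all joins of pairs from `S`, both equivalences follow.
-/

open Set

namespace Concept

instance instFinite {α β : Type*} {r : α → β → Prop} [Finite β] : Finite (Concept α β r) :=
  .of_injective _ intent_injective

variable {α : Type*} (T : Set α)

def principal [Preorder α] (a : α) : Concept α T (fun x u ↦ x ≤ ↑u) := ofObject _ a

variable {T}

@[simp]
theorem intent_principal [Preorder α] (a : α) : (principal T a).intent = {u : T | a ≤ u} := by
  ext u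
  simp [principal]

theorem extent_principal_of_mem [Preorder α] {a : α} (ha : a ∈ T) :
    (principal T a).extent = Iic a := by
  ext x
  simp only [principal, extent_ofObjects, mem_lowerPolar_iff, mem_upperPolar_singleton,
    Subtype.forall, mem_Iic]
  exact ⟨fun h ↦ h a ha le_rfl, fun hxa _ _ hau ↦ hxa.trans hau⟩

theorem principal_injOn [PartialOrder α] : InjOn (principal T) T := fun a ha b hb h ↦
  Iic_inj.1 <| by rw [← extent_principal_of_mem ha, ← extent_principal_of_mem hb, h]

theorem principal_sup [Lattice α] (a b : α) :
    principal T (a ⊔ b) = principal T a ⊔ principal T b :=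
  ext' <| by ext u; simp

theorem principal_sup_eq_principal_iff [Lattice α] {a b c : α} (hab : a ⊔ b ∈ T) (hc : c ∈ T) :
    principal T a ⊔ principal T b = principal T c ↔ a ⊔ b = c := by
  rw [← principal_sup]
  exact principal_injOn.eq_iff hab hc

theorem principal_inf_eq_principal_iff [Lattice α] {a b c : α} (ha : a ∈ T) (hb : b ∈ T)
    (hc : c ∈ T) : principal T a ⊓ principal T b = principal T c ↔ a ⊓ b = c := by
  rw [← extent_injective.eq_iff, extent_inf, extent_principal_of_mem ha,
    extent_principal_of_mem hb, extent_principal_of_mem hc, Iic_inter_Iic, Iic_inj]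

end Concept

/-- The variety of lattices has the finite embeddability property: every finite
relative partial sublattice of a lattice is a relative partial sublattice of a
finite lattice. -/
theorem lattice_fep (L : Type) [Lattice L] (S : Set L) (hS : S.Finite) :
    ∃ (K : Type) (_ : Lattice K) (_ : Fintype K) (f : S → K),
      Function.Injective f ∧
      ∀ a b c : S,
        (((a : L) ⊔ (b : L) = (c : L)) ↔ f a ⊔ f b = f c) ∧
        (((a : L) ⊓ (b : L) = (c : L)) ↔ f a ⊓ f b = f c) := by
  set T := S ∪ image2 (· ⊔ ·) S S
  have : Finite T := (hS.union (hS.image2 _ hS)).to_subtype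
  have hST : S ⊆ T := subset_union_left
  have hsup {a b : L} (ha : a ∈ S) (hb : b ∈ S) : a ⊔ b ∈ T := .inr (mem_image2_of_mem ha hb)
  refine ⟨Concept L T _, inferInstance, .ofFinite _, fun a ↦ Concept.principal T a,
    fun a b h ↦ Subtype.ext (Concept.principal_injOn (hST a.2) (hST b.2) h),
    fun ⟨a, ha⟩ ⟨b, hb⟩ ⟨c, hc⟩ ↦ ⟨?_, ?_⟩⟩
  · exact (Concept.principal_sup_eq_principal_iff (hsup ha hb) (hST hc)).symm
  · exact (Concept.principal_inf_eq_principal_iff (hST ha) (hST hb) (hST hc)).symm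
end

section
/- For every partially ordered set P there exist a lattice L and an injective map e : P → L such that e is an order embedding (a ≤ b in P if and only if e a ≤ e b in L), and for all a, b, c ∈ P: c is the least upper bound of {a, b} in P if and only if e a ⊔ e b = e c, and c is the greatest lower bound of {a, b} in P if and only if e a ⊓ e b = e c. (That is, the partial algebra on P given by the partially defined operations a ∨ b := sup(a,b) and a ∧ b := inf(a,b), whenever these exist, is a partial lattice: it is a relative subalgebra of a lattice.) -/
/-!
Embed `P` into its Dedekind–MacNeille completion by `a ↦ (Iic a, Ici a)`. The right set of a join
of cuts is the intersection of their right sets, so the join of the principal cuts of `a` and `b`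
has right set `upperBounds {a, b}`; it is the principal cut of `c` exactly when
`upperBounds {a, b} = Ici c`, i.e. when `c` is the least upper bound of `a` and `b`. Meets are dual,
with left sets and lower bounds.
-/

open Set

section Bounds
variable {α : Type*} [Preorder α] {s : Set α} {a : α}

theorem isLUB_iff_upperBounds_eq_Ici : IsLUB s a ↔ upperBounds s = Ici a :=
  ⟨IsLUB.upperBounds_eq, fun h => ⟨h ▸ self_mem_Ici, fun _ hb => (h ▸ hb : _ ∈ Ici a)⟩⟩

theorem isGLB_iff_lowerBounds_eq_Iic : IsGLB s a ↔ lowerBounds s = Iic a :=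
  ⟨IsGLB.lowerBounds_eq, fun h => ⟨h ▸ self_mem_Iic, fun _ hb => (h ▸ hb : _ ∈ Iic a)⟩⟩

end Bounds

namespace DedekindCut
variable {α : Type*} [Preorder α] {s : Set α} {c : α}

theorem right_sSup_image_principal (s : Set α) :
    (sSup (principal '' s)).right = upperBounds s := by
  ext; simp [mem_upperBounds]

theorem left_sInf_image_principal (s : Set α) :
    (sInf (principal '' s)).left = lowerBounds s := by
  ext; simp [mem_lowerBounds]

theorem sSup_image_principal_eq_principal_iff :
    sSup (principal '' s) = principal c ↔ IsLUB s c := by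
  rw [isLUB_iff_upperBounds_eq_Ici, ← right_sSup_image_principal, ← right_principal]
  exact ⟨congrArg right, ext'⟩

theorem sInf_image_principal_eq_principal_iff :
    sInf (principal '' s) = principal c ↔ IsGLB s c := by
  rw [isGLB_iff_lowerBounds_eq_Iic, ← left_sInf_image_principal, ← left_principal]
  exact ⟨congrArg left, ext⟩

end DedekindCut

/-- Every partially ordered set, with the partial operations `a ∨ b := sup(a,b)` and
`a ∧ b := inf(a,b)` (defined whenever the sup/inf exists), is a partial lattice:
it embeds as a relative subalgebra into a lattice. -/
theorem poset_is_partial_lattice (P : Type) [PartialOrder P] :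
    ∃ (L : Type) (_ : Lattice L) (e : P → L),
      Function.Injective e ∧
      (∀ a b : P, a ≤ b ↔ e a ≤ e b) ∧
      (∀ a b c : P, IsLUB ({a, b} : Set P) c ↔ e a ⊔ e b = e c) ∧
      (∀ a b c : P, IsGLB ({a, b} : Set P) c ↔ e a ⊓ e b = e c) := by
  refine ⟨DedekindCut P, inferInstance, DedekindCut.principal,
    fun _ _ => DedekindCut.principal_inj.1, fun _ _ => DedekindCut.principal_le_principal.symm,
    fun a b c => ?_, fun a b c => ?_⟩
  · rw [← DedekindCut.sSup_image_principal_eq_principal_iff, image_pair, sSup_pair]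
  · rw [← DedekindCut.sInf_image_principal_eq_principal_iff, image_pair, sInf_pair]
end

section
/- The class of finite lattices has the amalgamation property: whenever A, B₁, B₂ are finite lattices and f₁ : A → B₁ and f₂ : A → B₂ are injective lattice homomorphisms, there exist a finite lattice D and injective lattice homomorphisms g₁ : B₁ → D and g₂ : B₂ → D such that g₁ ∘ f₁ = g₂ ∘ f₂. -/
namespace FLA

variable {P : Type} (r : P → P → Prop)

/-- Upper bounds w.r.t. a raw relation. -/
def ub (S : Set P) : Set P := {x | ∀ s ∈ S, r s x}
/-- Lower bounds. -/
def lb (S : Set P) : Set P := {x | ∀ s ∈ S, r x s}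
/-- MacNeille closure. -/
def cl (S : Set P) : Set P := lb r (ub r S)

lemma subset_cl (S : Set P) : S ⊆ cl r S := fun s hs _ hx => hx s hs

lemma cl_mono {S T : Set P} (h : S ⊆ T) : cl r S ⊆ cl r T :=
  fun x hx t ht => hx t (fun s hs => ht s (h hs))

lemma ub_cl (S : Set P) : ub r (cl r S) = ub r S := by
  ext x
  constructor
  · intro hx s hs; exact hx s (subset_cl r S hs)
  · intro hx s hs; exact hs x hx

lemma cl_idem (S : Set P) : cl r (cl r S) = cl r S := by
  show lb r (ub r (cl r S)) = cl r S
  rw [ub_cl]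
  rfl

/-- Closed sets: the MacNeille completion. -/
def Closeds : Type := {S : Set P // cl r S = S}

instance : PartialOrder (Closeds r) := Subtype.partialOrder _

lemma Closeds.le_iff (S T : Closeds r) : S ≤ T ↔ S.1 ⊆ T.1 := Iff.rfl

def toCloseds (S : Set P) : Closeds r := ⟨cl r S, cl_idem r S⟩

lemma gc : GaloisConnection (toCloseds r) (Subtype.val : Closeds r → Set P) := by
  intro S T
  constructor
  · intro h; exact (subset_cl r S).trans h
  · intro h
    show cl r S ⊆ T.1
    calc cl r S ⊆ cl r T.1 := cl_mono r h
    _ = T.1 := T.2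

def gi : GaloisInsertion (toCloseds r) (Subtype.val : Closeds r → Set P) :=
  (gc r).toGaloisInsertion (fun T => by
    show T.1 ⊆ cl r T.1
    exact subset_cl r _)

instance : CompleteLattice (Closeds r) := (gi r).liftCompleteLattice

lemma coe_inf (S T : Closeds r) : (S ⊓ T : Closeds r).1 = S.1 ∩ T.1 :=
  (gc r).u_inf

lemma sup_eq (S T : Closeds r) : S ⊔ T = toCloseds r (S.1 ∪ T.1) := by
  have h1 : toCloseds r S.1 = S := (gi r).l_u_eq S
  have h2 : toCloseds r T.1 = T := (gi r).l_u_eq T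
  have h3 : toCloseds r (S.1 ⊔ T.1) = toCloseds r S.1 ⊔ toCloseds r T.1 := (gc r).l_sup
  rw [h1, h2] at h3
  exact h3.symm

/-- The principal down-set determined by `p`. -/
def down (hrefl : ∀ x, r x x) (htrans : ∀ {x y z}, r x y → r y z → r x z)
    (p : P) : Closeds r :=
  ⟨{x | r x p}, by
    apply Set.Subset.antisymm
    · intro x hx
      exact hx p (fun s hs => hs)
    · exact subset_cl r _⟩

variable (hrefl : ∀ x, r x x) (htrans : ∀ {x y z}, r x y → r y z → r x z)

lemma down_eq_iff {p q : P} :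
    down r hrefl htrans p = down r hrefl htrans q ↔ (r p q ∧ r q p) := by
  constructor
  · intro h
    have h' : ({x | r x p} : Set P) = {x | r x q} := congrArg Subtype.val h
    rw [Set.ext_iff] at h'
    exact ⟨(h' p).mp (hrefl p), (h' q).mpr (hrefl q)⟩
  · intro ⟨h1, h2⟩
    apply Subtype.ext
    ext x
    exact ⟨fun hx => htrans hx h1, fun hx => htrans hx h2⟩

lemma down_sup {p q s : P} (h1 : r p s) (h2 : r q s)
    (h3 : ∀ t, r p t → r q t → r s t) :
    down r hrefl htrans p ⊔ down r hrefl htrans q = down r hrefl htrans s := by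
  apply le_antisymm
  · apply sup_le
    · intro x hx; exact htrans hx h1
    · intro x hx; exact htrans hx h2
  · rw [sup_eq]
    intro x (hx : r x s)
    show x ∈ cl r _
    have hs : s ∈ cl r ((down r hrefl htrans p).1 ∪ (down r hrefl htrans q).1) := by
      intro t ht
      exact h3 t (ht p (Or.inl (hrefl p))) (ht q (Or.inr (hrefl q)))
    intro t ht
    exact htrans hx (hs t ht)

lemma down_inf {p q m : P} (h1 : r m p) (h2 : r m q)
    (h3 : ∀ t, r t p → r t q → r t m) :
    down r hrefl htrans p ⊓ down r hrefl htrans q = down r hrefl htrans m := by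
  apply Subtype.ext
  rw [coe_inf]
  ext x
  constructor
  · intro ⟨hxp, hxq⟩; exact h3 x hxp hxq
  · intro hx; exact ⟨htrans hx h1, htrans hx h2⟩

instance [Finite P] : Finite (Closeds r) := Subtype.finite

end FLA
open FLA

/-- The class of finite lattices has the amalgamation property. -/
theorem finite_lattice_amalgamation (A B₁ B₂ : Type)
    [Lattice A] [Lattice B₁] [Lattice B₂] [Fintype A] [Fintype B₁] [Fintype B₂]
    (f₁ : A → B₁) (f₂ : A → B₂)
    (hf₁ : Function.Injective f₁) (hf₂ : Function.Injective f₂)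
    (hom₁ : ∀ a b : A, f₁ (a ⊔ b) = f₁ a ⊔ f₁ b ∧ f₁ (a ⊓ b) = f₁ a ⊓ f₁ b)
    (hom₂ : ∀ a b : A, f₂ (a ⊔ b) = f₂ a ⊔ f₂ b ∧ f₂ (a ⊓ b) = f₂ a ⊓ f₂ b) :
    ∃ (D : Type) (_ : Lattice D) (_ : Fintype D) (g₁ : B₁ → D) (g₂ : B₂ → D),
      Function.Injective g₁ ∧ Function.Injective g₂ ∧
      (∀ a b : B₁, g₁ (a ⊔ b) = g₁ a ⊔ g₁ b ∧ g₁ (a ⊓ b) = g₁ a ⊓ g₁ b) ∧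
      (∀ a b : B₂, g₂ (a ⊔ b) = g₂ a ⊔ g₂ b ∧ g₂ (a ⊓ b) = g₂ a ⊓ g₂ b) ∧
      g₁ ∘ f₁ = g₂ ∘ f₂ := by
  classical
  -- monotonicity and order-reflection of f₁, f₂
  have mono₁ : ∀ {a b : A}, a ≤ b → f₁ a ≤ f₁ b := by
    intro a b h
    have : f₁ (a ⊓ b) = f₁ a := by rw [inf_eq_left.mpr h]
    rw [(hom₁ a b).2] at this
    exact inf_eq_left.mp this
  have mono₂ : ∀ {a b : A}, a ≤ b → f₂ a ≤ f₂ b := by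
    intro a b h
    have : f₂ (a ⊓ b) = f₂ a := by rw [inf_eq_left.mpr h]
    rw [(hom₂ a b).2] at this
    exact inf_eq_left.mp this
  have refl₁ : ∀ {a b : A}, f₁ a ≤ f₁ b → a ≤ b := by
    intro a b h
    have : f₁ (a ⊓ b) = f₁ a := by rw [(hom₁ a b).2, inf_eq_left.mpr h]
    exact inf_eq_left.mp (hf₁ this)
  have refl₂ : ∀ {a b : A}, f₂ a ≤ f₂ b → a ≤ b := by
    intro a b h
    have : f₂ (a ⊓ b) = f₂ a := by rw [(hom₂ a b).2, inf_eq_left.mpr h]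
    exact inf_eq_left.mp (hf₂ this)
  -- the amalgamated preorder on B₁ ⊕ B₂
  set r : (B₁ ⊕ B₂) → (B₁ ⊕ B₂) → Prop := fun x y =>
    match x, y with
    | .inl x, .inl y => x ≤ y
    | .inl x, .inr y => ∃ a, x ≤ f₁ a ∧ f₂ a ≤ y
    | .inr x, .inl y => ∃ a, x ≤ f₂ a ∧ f₁ a ≤ y
    | .inr x, .inr y => x ≤ y
    with hr
  have hrefl : ∀ x, r x x := by
    intro x; cases x <;> simp [hr]
  have htrans : ∀ {x y z}, r x y → r y z → r x z := by
    intro x y z hxy hyz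
    cases x with
    | inl x => cases y with
      | inl y => cases z with
        | inl z => exact le_trans hxy hyz
        | inr z =>
          obtain ⟨a, h1, h2⟩ := hyz
          exact ⟨a, le_trans hxy h1, h2⟩
      | inr y => cases z with
        | inl z =>
          obtain ⟨a, h1, h2⟩ := hxy
          obtain ⟨a', h1', h2'⟩ := hyz
          exact le_trans h1 (le_trans (mono₁ (refl₂ (le_trans h2 h1'))) h2')
        | inr z =>
          obtain ⟨a, h1, h2⟩ := hxy
          exact ⟨a, h1, le_trans h2 hyz⟩
    | inr x => cases y with
      | inl y => cases z with
        | inl z =>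
          obtain ⟨a, h1, h2⟩ := hxy
          exact ⟨a, h1, le_trans h2 hyz⟩
        | inr z =>
          obtain ⟨a, h1, h2⟩ := hxy
          obtain ⟨a', h1', h2'⟩ := hyz
          exact le_trans h1 (le_trans (mono₂ (refl₁ (le_trans h2 h1'))) h2')
      | inr y => cases z with
        | inl z =>
          obtain ⟨a, h1, h2⟩ := hyz
          exact ⟨a, le_trans hxy h1, h2⟩
        | inr z => exact le_trans hxy hyz
  refine ⟨Closeds r, inferInstance, Fintype.ofFinite _,
    fun b => down r hrefl htrans (.inl b), fun b => down r hrefl htrans (.inr b),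
    ?_, ?_, ?_, ?_, ?_⟩
  · intro b b' h
    obtain ⟨h1, h2⟩ := (down_eq_iff r hrefl htrans).mp h
    exact le_antisymm h1 h2
  · intro b b' h
    obtain ⟨h1, h2⟩ := (down_eq_iff r hrefl htrans).mp h
    exact le_antisymm h1 h2
  · intro b b'
    constructor
    · refine (down_sup r hrefl htrans (le_sup_left : b ≤ b ⊔ b') le_sup_right ?_).symm
      rintro (t | t) h1 h2
      · exact sup_le h1 h2
      · obtain ⟨a, ha1, ha2⟩ := h1
        obtain ⟨a', ha1', ha2'⟩ := h2
        refine ⟨a ⊔ a', sup_le (le_trans ha1 (mono₁ le_sup_left))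
          (le_trans ha1' (mono₁ le_sup_right)), ?_⟩
        rw [(hom₂ a a').1]
        exact sup_le ha2 ha2'
    · refine (down_inf r hrefl htrans (inf_le_left : b ⊓ b' ≤ b) inf_le_right ?_).symm
      rintro (t | t) h1 h2
      · exact le_inf h1 h2
      · obtain ⟨a, ha1, ha2⟩ := h1
        obtain ⟨a', ha1', ha2'⟩ := h2
        refine ⟨a ⊓ a', ?_, ?_⟩
        · rw [(hom₂ a a').2]; exact le_inf ha1 ha1'
        · exact le_inf (le_trans (mono₁ inf_le_left) ha2)
            (le_trans (mono₁ inf_le_right) ha2')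
  · intro b b'
    constructor
    · refine (down_sup r hrefl htrans (le_sup_left : b ≤ b ⊔ b') le_sup_right ?_).symm
      rintro (t | t) h1 h2
      · obtain ⟨a, ha1, ha2⟩ := h1
        obtain ⟨a', ha1', ha2'⟩ := h2
        refine ⟨a ⊔ a', sup_le (le_trans ha1 (mono₂ le_sup_left))
          (le_trans ha1' (mono₂ le_sup_right)), ?_⟩
        rw [(hom₁ a a').1]
        exact sup_le ha2 ha2'
      · exact sup_le h1 h2
    · refine (down_inf r hrefl htrans (inf_le_left : b ⊓ b' ≤ b) inf_le_right ?_).symm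
      rintro (t | t) h1 h2
      · obtain ⟨a, ha1, ha2⟩ := h1
        obtain ⟨a', ha1', ha2'⟩ := h2
        refine ⟨a ⊓ a', ?_, ?_⟩
        · rw [(hom₁ a a').2]; exact le_inf ha1 ha1'
        · exact le_inf (le_trans (mono₂ inf_le_left) ha2)
            (le_trans (mono₂ inf_le_right) ha2')
      · exact le_inf h1 h2
  · funext a
    apply Subtype.ext
    ext x
    show r x (.inl (f₁ a)) ↔ r x (.inr (f₂ a))
    cases x with
    | inl x =>
      constructor
      · intro h; exact ⟨a, h, le_refl _⟩
      · rintro ⟨a', h1, h2⟩; exact le_trans h1 (mono₁ (refl₂ h2))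
    | inr x =>
      constructor
      · rintro ⟨a', h1, h2⟩; exact le_trans h1 (mono₂ (refl₁ h2))
      · intro h; exact ⟨a, h, le_refl _⟩
end

section
/- The class of {0,1}-lattices has the amalgamation property: whenever A, B₁, B₂ are bounded lattices and f₁ : A → B₁ and f₂ : A → B₂ are injective bounded lattice homomorphisms, there exist a bounded lattice D and injective bounded lattice homomorphisms g₁ : B₁ → D and g₂ : B₂ → D such that g₁ ∘ f₁ = g₂ ∘ f₂. Moreover, if B₁ and B₂ are finite, then D can be chosen to be finite. -/
/-- A bounded lattice homomorphism: preserves `⊔`, `⊓`, `⊥` and `⊤`. -/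
def IsBddLatHom {A B : Type} [Lattice A] [BoundedOrder A] [Lattice B] [BoundedOrder B]
    (f : A → B) : Prop :=
  (∀ a b : A, f (a ⊔ b) = f a ⊔ f b ∧ f (a ⊓ b) = f a ⊓ f b) ∧ f ⊥ = ⊥ ∧ f ⊤ = ⊤

namespace BddLatAmalg

variable {A B₁ B₂ : Type} [Lattice A] [BoundedOrder A] [Lattice B₁] [BoundedOrder B₁]
  [Lattice B₂] [BoundedOrder B₂]

/-- The amalgamated preorder relation on `B₁ ⊕ B₂`. -/
def r (f₁ : A → B₁) (f₂ : A → B₂) : B₁ ⊕ B₂ → B₁ ⊕ B₂ → Prop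
  | .inl x, .inl y => x ≤ y
  | .inl x, .inr y => ∃ a, x ≤ f₁ a ∧ f₂ a ≤ y
  | .inr x, .inl y => ∃ a, x ≤ f₂ a ∧ f₁ a ≤ y
  | .inr x, .inr y => x ≤ y

/-- Ideals: down-closed (for `r`), closed under joins on each side, containing `⊥`. -/
def IsIdl (f₁ : A → B₁) (f₂ : A → B₂) (S : Set (B₁ ⊕ B₂)) : Prop :=
  (∀ ⦃x y⦄, r f₁ f₂ x y → y ∈ S → x ∈ S) ∧
  (∀ x y, Sum.inl x ∈ S → Sum.inl y ∈ S → Sum.inl (x ⊔ y) ∈ S) ∧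
  (∀ x y, Sum.inr x ∈ S → Sum.inr y ∈ S → Sum.inr (x ⊔ y) ∈ S) ∧
  Sum.inl (⊥ : B₁) ∈ S

variable (f₁ : A → B₁) (f₂ : A → B₂)

lemma isIdl_univ : IsIdl f₁ f₂ Set.univ :=
  ⟨fun _ _ _ _ => trivial, fun _ _ _ _ => trivial, fun _ _ _ _ => trivial, trivial⟩

lemma isIdl_inter {S T : Set (B₁ ⊕ B₂)} (hS : IsIdl f₁ f₂ S) (hT : IsIdl f₁ f₂ T) :
    IsIdl f₁ f₂ (S ∩ T) :=
  ⟨fun x y hxy hy => ⟨hS.1 hxy hy.1, hT.1 hxy hy.2⟩,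
   fun x y hx hy => ⟨hS.2.1 x y hx.1 hy.1, hT.2.1 x y hx.2 hy.2⟩,
   fun x y hx hy => ⟨hS.2.2.1 x y hx.1 hy.1, hT.2.2.1 x y hx.2 hy.2⟩,
   ⟨hS.2.2.2, hT.2.2.2⟩⟩

/-- Closure: smallest ideal containing `T`. -/
def cl (T : Set (B₁ ⊕ B₂)) : Set (B₁ ⊕ B₂) :=
  ⋂₀ {U | IsIdl f₁ f₂ U ∧ T ⊆ U}

lemma isIdl_cl (T : Set (B₁ ⊕ B₂)) : IsIdl f₁ f₂ (cl f₁ f₂ T) := by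
  refine ⟨fun x y hxy hy U hU => hU.1.1 hxy (hy U hU),
    fun x y hx hy U hU => hU.1.2.1 x y (hx U hU) (hy U hU),
    fun x y hx hy U hU => hU.1.2.2.1 x y (hx U hU) (hy U hU),
    fun U hU => hU.1.2.2.2⟩

lemma subset_cl (T : Set (B₁ ⊕ B₂)) : T ⊆ cl f₁ f₂ T :=
  fun x hx U hU => hU.2 hx

lemma cl_subset {T U : Set (B₁ ⊕ B₂)} (hU : IsIdl f₁ f₂ U) (h : T ⊆ U) :
    cl f₁ f₂ T ⊆ U := fun x hx => hx U ⟨hU, h⟩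

/-- The amalgam: the lattice of ideals. -/
def Idl := {S : Set (B₁ ⊕ B₂) // IsIdl f₁ f₂ S}

instance : PartialOrder (Idl f₁ f₂) := Subtype.partialOrder _

lemma le_def {S T : Idl f₁ f₂} : S ≤ T ↔ S.1 ⊆ T.1 := Iff.rfl

instance : Lattice (Idl f₁ f₂) where
  sup S T := ⟨cl f₁ f₂ (S.1 ∪ T.1), isIdl_cl f₁ f₂ _⟩
  le_sup_left S T := (Set.subset_union_left).trans (subset_cl f₁ f₂ _)
  le_sup_right S T := (Set.subset_union_right).trans (subset_cl f₁ f₂ _)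
  sup_le S T W hS hT := cl_subset f₁ f₂ W.2 (Set.union_subset hS hT)
  inf S T := ⟨S.1 ∩ T.1, isIdl_inter f₁ f₂ S.2 T.2⟩
  inf_le_left S T := Set.inter_subset_left
  inf_le_right S T := Set.inter_subset_right
  le_inf S T W hT hW := Set.subset_inter hT hW

instance : BoundedOrder (Idl f₁ f₂) where
  top := ⟨Set.univ, isIdl_univ f₁ f₂⟩
  le_top S := Set.subset_univ _
  bot := ⟨cl f₁ f₂ ∅, isIdl_cl f₁ f₂ _⟩
  bot_le S := cl_subset f₁ f₂ S.2 (Set.empty_subset _)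

section Maps

variable (hf₁ : Function.Injective f₁) (hf₂ : Function.Injective f₂)
  (hl₁ : IsBddLatHom f₁) (hl₂ : IsBddLatHom f₂)

include hf₁ hl₁ in
lemma f₁_le_f₁ {a a' : A} (h : f₁ a ≤ f₁ a') : a ≤ a' := by
  have : f₁ (a ⊓ a') = f₁ a := by rw [(hl₁.1 a a').2, inf_eq_left.2 h]
  exact inf_eq_left.1 (hf₁ this)

include hf₂ hl₂ in
lemma f₂_le_f₂ {a a' : A} (h : f₂ a ≤ f₂ a') : a ≤ a' := by
  have : f₂ (a ⊓ a') = f₂ a := by rw [(hl₂.1 a a').2, inf_eq_left.2 h]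
  exact inf_eq_left.1 (hf₂ this)

include hl₁ in
lemma f₁_mono {a a' : A} (h : a ≤ a') : f₁ a ≤ f₁ a' := by
  have : f₁ (a ⊔ a') = f₁ a ⊔ f₁ a' := (hl₁.1 a a').1
  calc f₁ a ≤ f₁ a ⊔ f₁ a' := le_sup_left
    _ = f₁ (a ⊔ a') := this.symm
    _ = f₁ a' := by rw [sup_eq_right.2 h]

include hl₂ in
lemma f₂_mono {a a' : A} (h : a ≤ a') : f₂ a ≤ f₂ a' := by
  have : f₂ (a ⊔ a') = f₂ a ⊔ f₂ a' := (hl₂.1 a a').1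
  calc f₂ a ≤ f₂ a ⊔ f₂ a' := le_sup_left
    _ = f₂ (a ⊔ a') := this.symm
    _ = f₂ a' := by rw [sup_eq_right.2 h]

lemma r_refl (x : B₁ ⊕ B₂) : r f₁ f₂ x x := by cases x <;> exact le_refl _

include hf₁ hf₂ hl₁ hl₂ in
lemma r_trans {x y z : B₁ ⊕ B₂} (hxy : r f₁ f₂ x y) (hyz : r f₁ f₂ y z) :
    r f₁ f₂ x z := by
  cases x <;> cases y <;> cases z <;>
    simp only [r] at *
  · exact hxy.trans hyz
  · obtain ⟨a, h1, h2⟩ := hyz; exact ⟨a, hxy.trans h1, h2⟩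
  · obtain ⟨a, h1, h2⟩ := hxy; obtain ⟨a', h1', h2'⟩ := hyz
    have haa : a ≤ a' := f₂_le_f₂ f₂ hf₂ hl₂ (h2.trans h1')
    exact h1.trans ((f₁_mono f₁ hl₁ haa).trans h2')
  · obtain ⟨a, h1, h2⟩ := hxy; exact ⟨a, h1, h2.trans hyz⟩
  · obtain ⟨a, h1, h2⟩ := hxy; exact ⟨a, h1, h2.trans hyz⟩
  · obtain ⟨a, h1, h2⟩ := hxy; obtain ⟨a', h1', h2'⟩ := hyz
    have haa : a ≤ a' := f₁_le_f₁ f₁ hf₁ hl₁ (h2.trans h1')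
    exact h1.trans ((f₂_mono f₂ hl₂ haa).trans h2')
  · obtain ⟨a, h1, h2⟩ := hyz; exact ⟨a, hxy.trans h1, h2⟩
  · exact hxy.trans hyz


/-- The down-set of an element. -/
def dn (c : B₁ ⊕ B₂) : Set (B₁ ⊕ B₂) := {x | r f₁ f₂ x c}

include hf₁ hf₂ hl₁ hl₂ in
lemma isIdl_dn (c : B₁ ⊕ B₂) : IsIdl f₁ f₂ (dn f₁ f₂ c) := by
  refine ⟨fun x y hxy hy => r_trans f₁ f₂ hf₁ hf₂ hl₁ hl₂ hxy hy, ?_, ?_, ?_⟩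
  · intro x y hx hy
    cases c with
    | inl b => exact sup_le hx hy
    | inr b =>
      obtain ⟨a, h1, h2⟩ := hx; obtain ⟨a', h1', h2'⟩ := hy
      refine ⟨a ⊔ a', ?_, ?_⟩
      · rw [(hl₁.1 a a').1]; exact sup_le (h1.trans le_sup_left) (h1'.trans le_sup_right)
      · rw [(hl₂.1 a a').1]; exact sup_le h2 h2'
  · intro x y hx hy
    cases c with
    | inr b => exact sup_le hx hy
    | inl b =>
      obtain ⟨a, h1, h2⟩ := hx; obtain ⟨a', h1', h2'⟩ := hy
      refine ⟨a ⊔ a', ?_, ?_⟩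
      · rw [(hl₂.1 a a').1]; exact sup_le (h1.trans le_sup_left) (h1'.trans le_sup_right)
      · rw [(hl₁.1 a a').1]; exact sup_le h2 h2'
  · cases c with
    | inl b => exact bot_le
    | inr b =>
      refine ⟨⊥, bot_le, ?_⟩
      rw [hl₂.2.1]; exact bot_le

/-- The first embedding. -/
def g₁ (b : B₁) : Idl f₁ f₂ := ⟨dn f₁ f₂ (.inl b), isIdl_dn f₁ f₂ hf₁ hf₂ hl₁ hl₂ _⟩

/-- The second embedding. -/
def g₂ (b : B₂) : Idl f₁ f₂ := ⟨dn f₁ f₂ (.inr b), isIdl_dn f₁ f₂ hf₁ hf₂ hl₁ hl₂ _⟩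

include hf₁ hf₂ hl₁ hl₂ in
lemma g₁_inj : Function.Injective (g₁ f₁ f₂ hf₁ hf₂ hl₁ hl₂) := by
  intro b b' h
  have he : dn f₁ f₂ (.inl b) = dn f₁ f₂ (.inl b') := congrArg Subtype.val h
  have h1 : (Sum.inl b : B₁ ⊕ B₂) ∈ dn f₁ f₂ (.inl b') := he ▸ r_refl f₁ f₂ (.inl b)
  have h2 : (Sum.inl b' : B₁ ⊕ B₂) ∈ dn f₁ f₂ (.inl b) := he ▸ r_refl f₁ f₂ (.inl b')
  exact le_antisymm (h1 : b ≤ b') (h2 : b' ≤ b)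

include hf₁ hf₂ hl₁ hl₂ in
lemma g₂_inj : Function.Injective (g₂ f₁ f₂ hf₁ hf₂ hl₁ hl₂) := by
  intro b b' h
  have he : dn f₁ f₂ (.inr b) = dn f₁ f₂ (.inr b') := congrArg Subtype.val h
  have h1 : (Sum.inr b : B₁ ⊕ B₂) ∈ dn f₁ f₂ (.inr b') := he ▸ r_refl f₁ f₂ (.inr b)
  have h2 : (Sum.inr b' : B₁ ⊕ B₂) ∈ dn f₁ f₂ (.inr b) := he ▸ r_refl f₁ f₂ (.inr b')
  exact le_antisymm (h1 : b ≤ b') (h2 : b' ≤ b)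

include hf₁ hf₂ hl₁ hl₂ in
lemma g₁_hom : IsBddLatHom (g₁ f₁ f₂ hf₁ hf₂ hl₁ hl₂) := by
  refine ⟨fun b b' => ⟨?_, ?_⟩, ?_, ?_⟩
  · -- sup
    apply Subtype.ext
    apply subset_antisymm
    · intro x hx
      have hb : Sum.inl b ∈ (g₁ f₁ f₂ hf₁ hf₂ hl₁ hl₂ b ⊔ g₁ f₁ f₂ hf₁ hf₂ hl₁ hl₂ b').1 :=
        subset_cl f₁ f₂ _ (Or.inl (r_refl f₁ f₂ (.inl b)))
      have hb' : Sum.inl b' ∈ (g₁ f₁ f₂ hf₁ hf₂ hl₁ hl₂ b ⊔ g₁ f₁ f₂ hf₁ hf₂ hl₁ hl₂ b').1 :=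
        subset_cl f₁ f₂ _ (Or.inr (r_refl f₁ f₂ (.inl b')))
      have hbb : Sum.inl (b ⊔ b') ∈ (g₁ f₁ f₂ hf₁ hf₂ hl₁ hl₂ b ⊔ g₁ f₁ f₂ hf₁ hf₂ hl₁ hl₂ b').1 :=
        (isIdl_cl f₁ f₂ _).2.1 b b' hb hb'
      exact (isIdl_cl f₁ f₂ _).1 hx hbb
    · apply cl_subset f₁ f₂ (isIdl_dn f₁ f₂ hf₁ hf₂ hl₁ hl₂ _)
      rintro x (hx | hx)
      · exact r_trans f₁ f₂ hf₁ hf₂ hl₁ hl₂ hx (le_sup_left : b ≤ b ⊔ b')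
      · exact r_trans f₁ f₂ hf₁ hf₂ hl₁ hl₂ hx (le_sup_right : b' ≤ b ⊔ b')
  · -- inf
    apply Subtype.ext
    ext x
    cases x with
    | inl y => exact le_inf_iff
    | inr y =>
      constructor
      · rintro ⟨a, h1, h2⟩
        exact ⟨⟨a, h1, h2.trans inf_le_left⟩, ⟨a, h1, h2.trans inf_le_right⟩⟩
      · rintro ⟨⟨a, h1, h2⟩, ⟨a', h1', h2'⟩⟩
        refine ⟨a ⊓ a', ?_, ?_⟩
        · rw [(hl₂.1 a a').2]; exact le_inf h1 h1'
        · rw [(hl₁.1 a a').2]; exact le_inf (inf_le_left.trans h2) (inf_le_right.trans h2')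
  · -- bot
    apply Subtype.ext
    apply subset_antisymm
    · intro x hx U hU
      exact hU.1.1 hx hU.1.2.2.2
    · exact cl_subset f₁ f₂ (isIdl_dn f₁ f₂ hf₁ hf₂ hl₁ hl₂ _) (Set.empty_subset _)
  · -- top
    apply Subtype.ext
    apply Set.eq_univ_of_forall
    intro x
    cases x with
    | inl y => exact (le_top : y ≤ ⊤)
    | inr y =>
      refine ⟨⊤, ?_, le_top⟩
      rw [hl₂.2.2]; exact le_top

include hf₁ hf₂ hl₁ hl₂ in
lemma g₂_hom : IsBddLatHom (g₂ f₁ f₂ hf₁ hf₂ hl₁ hl₂) := by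
  refine ⟨fun b b' => ⟨?_, ?_⟩, ?_, ?_⟩
  · apply Subtype.ext
    apply subset_antisymm
    · intro x hx
      have hb : Sum.inr b ∈ (g₂ f₁ f₂ hf₁ hf₂ hl₁ hl₂ b ⊔ g₂ f₁ f₂ hf₁ hf₂ hl₁ hl₂ b').1 :=
        subset_cl f₁ f₂ _ (Or.inl (r_refl f₁ f₂ (.inr b)))
      have hb' : Sum.inr b' ∈ (g₂ f₁ f₂ hf₁ hf₂ hl₁ hl₂ b ⊔ g₂ f₁ f₂ hf₁ hf₂ hl₁ hl₂ b').1 :=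
        subset_cl f₁ f₂ _ (Or.inr (r_refl f₁ f₂ (.inr b')))
      have hbb : Sum.inr (b ⊔ b') ∈ (g₂ f₁ f₂ hf₁ hf₂ hl₁ hl₂ b ⊔ g₂ f₁ f₂ hf₁ hf₂ hl₁ hl₂ b').1 :=
        (isIdl_cl f₁ f₂ _).2.2.1 b b' hb hb'
      exact (isIdl_cl f₁ f₂ _).1 hx hbb
    · apply cl_subset f₁ f₂ (isIdl_dn f₁ f₂ hf₁ hf₂ hl₁ hl₂ _)
      rintro x (hx | hx)
      · exact r_trans f₁ f₂ hf₁ hf₂ hl₁ hl₂ hx (le_sup_left : b ≤ b ⊔ b')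
      · exact r_trans f₁ f₂ hf₁ hf₂ hl₁ hl₂ hx (le_sup_right : b' ≤ b ⊔ b')
  · apply Subtype.ext
    ext x
    cases x with
    | inr y => exact le_inf_iff
    | inl y =>
      constructor
      · rintro ⟨a, h1, h2⟩
        exact ⟨⟨a, h1, h2.trans inf_le_left⟩, ⟨a, h1, h2.trans inf_le_right⟩⟩
      · rintro ⟨⟨a, h1, h2⟩, ⟨a', h1', h2'⟩⟩
        refine ⟨a ⊓ a', ?_, ?_⟩
        · rw [(hl₁.1 a a').2]; exact le_inf h1 h1'
        · rw [(hl₂.1 a a').2]; exact le_inf (inf_le_left.trans h2) (inf_le_right.trans h2')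
  · apply Subtype.ext
    apply subset_antisymm
    · intro x hx U hU
      have hr : r f₁ f₂ (Sum.inr (⊥ : B₂)) (Sum.inl (⊥ : B₁)) :=
        show ∃ a, (⊥ : B₂) ≤ f₂ a ∧ f₁ a ≤ (⊥ : B₁) from
          ⟨⊥, bot_le, by rw [hl₁.2.1]⟩
      have hbot : Sum.inr (⊥ : B₂) ∈ U := hU.1.1 hr hU.1.2.2.2
      exact hU.1.1 hx hbot
    · exact cl_subset f₁ f₂ (isIdl_dn f₁ f₂ hf₁ hf₂ hl₁ hl₂ _) (Set.empty_subset _)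
  · apply Subtype.ext
    apply Set.eq_univ_of_forall
    intro x
    cases x with
    | inr y => exact (le_top : y ≤ ⊤)
    | inl y =>
      refine ⟨⊤, ?_, le_top⟩
      rw [hl₁.2.2]; exact le_top

include hf₁ hf₂ hl₁ hl₂ in
lemma g_comm : (g₁ f₁ f₂ hf₁ hf₂ hl₁ hl₂) ∘ f₁ = (g₂ f₁ f₂ hf₁ hf₂ hl₁ hl₂) ∘ f₂ := by
  funext a
  apply Subtype.ext
  ext x
  cases x with
  | inl y =>
    constructor
    · intro (h : y ≤ f₁ a); exact ⟨a, h, le_refl _⟩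
    · rintro ⟨a', h1, h2⟩
      exact (h1.trans (f₁_mono f₁ hl₁ (f₂_le_f₂ f₂ hf₂ hl₂ h2)) : y ≤ f₁ a)
  | inr y =>
    constructor
    · rintro ⟨a', h1, h2⟩
      exact (h1.trans (f₂_mono f₂ hl₂ (f₁_le_f₁ f₁ hf₁ hl₁ h2)) : y ≤ f₂ a)
    · intro (h : y ≤ f₂ a); exact ⟨a, h, le_refl _⟩

end Maps

instance [Finite B₁] [Finite B₂] : Finite (Idl f₁ f₂) :=
  Subtype.finite

end BddLatAmalg

/-- The class of `{0,1}`-lattices has the amalgamation property; moreover, the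
amalgam of finite bounded lattices can be chosen finite. -/
theorem bounded_lattice_amalgamation :
    (∀ (A B₁ B₂ : Type) [Lattice A] [BoundedOrder A] [Lattice B₁] [BoundedOrder B₁]
        [Lattice B₂] [BoundedOrder B₂] (f₁ : A → B₁) (f₂ : A → B₂),
      Function.Injective f₁ → Function.Injective f₂ →
      IsBddLatHom f₁ → IsBddLatHom f₂ →
      ∃ (D : Type) (instD : Lattice D) (instD' : BoundedOrder D)
        (g₁ : B₁ → D) (g₂ : B₂ → D),
        Function.Injective g₁ ∧ Function.Injective g₂ ∧
        IsBddLatHom g₁ ∧ IsBddLatHom g₂ ∧ g₁ ∘ f₁ = g₂ ∘ f₂) ∧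
    (∀ (A B₁ B₂ : Type) [Lattice A] [BoundedOrder A] [Lattice B₁] [BoundedOrder B₁]
        [Lattice B₂] [BoundedOrder B₂] [Fintype B₁] [Fintype B₂]
        (f₁ : A → B₁) (f₂ : A → B₂),
      Function.Injective f₁ → Function.Injective f₂ →
      IsBddLatHom f₁ → IsBddLatHom f₂ →
      ∃ (D : Type) (instD : Lattice D) (instD' : BoundedOrder D) (_ : Fintype D)
        (g₁ : B₁ → D) (g₂ : B₂ → D),
        Function.Injective g₁ ∧ Function.Injective g₂ ∧
        IsBddLatHom g₁ ∧ IsBddLatHom g₂ ∧ g₁ ∘ f₁ = g₂ ∘ f₂) := by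
  constructor
  · intro A B₁ B₂ _ _ _ _ _ _ f₁ f₂ hf₁ hf₂ hl₁ hl₂
    exact ⟨BddLatAmalg.Idl f₁ f₂, inferInstance, inferInstance,
      BddLatAmalg.g₁ f₁ f₂ hf₁ hf₂ hl₁ hl₂, BddLatAmalg.g₂ f₁ f₂ hf₁ hf₂ hl₁ hl₂,
      BddLatAmalg.g₁_inj f₁ f₂ hf₁ hf₂ hl₁ hl₂, BddLatAmalg.g₂_inj f₁ f₂ hf₁ hf₂ hl₁ hl₂,
      BddLatAmalg.g₁_hom f₁ f₂ hf₁ hf₂ hl₁ hl₂, BddLatAmalg.g₂_hom f₁ f₂ hf₁ hf₂ hl₁ hl₂,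
      BddLatAmalg.g_comm f₁ f₂ hf₁ hf₂ hl₁ hl₂⟩
  · intro A B₁ B₂ _ _ _ _ _ _ _ _ f₁ f₂ hf₁ hf₂ hl₁ hl₂
    exact ⟨BddLatAmalg.Idl f₁ f₂, inferInstance, inferInstance, Fintype.ofFinite _,
      BddLatAmalg.g₁ f₁ f₂ hf₁ hf₂ hl₁ hl₂, BddLatAmalg.g₂ f₁ f₂ hf₁ hf₂ hl₁ hl₂,
      BddLatAmalg.g₁_inj f₁ f₂ hf₁ hf₂ hl₁ hl₂, BddLatAmalg.g₂_inj f₁ f₂ hf₁ hf₂ hl₁ hl₂,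
      BddLatAmalg.g₁_hom f₁ f₂ hf₁ hf₂ hl₁ hl₂, BddLatAmalg.g₂_hom f₁ f₂ hf₁ hf₂ hl₁ hl₂,
      BddLatAmalg.g_comm f₁ f₂ hf₁ hf₂ hl₁ hl₂⟩
end

section
/- The class of {0,1}-lattices has the finite embeddability property: for every bounded lattice L and every finite subset S ⊆ L with ⊥ ∈ S and ⊤ ∈ S, there exist a finite bounded lattice K and an injective map f : S → K with f ⊥ = ⊥ and f ⊤ = ⊤ such that for all a, b, c ∈ S one has a ⊔ b = c if and only if f a ⊔ f b = f c, and a ⊓ b = c if and only if f a ⊓ f b = f c. -/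
/-!
Let `T` be the closure of `S` under binary meets; it is finite. Send `a ∈ L` to the trace
`{t ∈ T | t ≤ a}` of its principal ideal, inside the finite lattice of traces on `T` of ideals
of `L`, whose meets are intersections. Traces of principal ideals meet like their generators, and
for `a, b ∈ T` the join of the traces of `↓a` and `↓b` is the trace of `↓(a ⊔ b)`. Since the trace
of `↓x` determines `x` as soon as `x ∈ T`, and `T` is closed under meets, both joins and meets
of elements of `S` are preserved and reflected.
-/

variable {L : Type*} [Lattice L] [OrderBot L] (T : Set L)

/-- The traces `T ∩ I` on `T` of the ideals `I` of `L`. -/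
def IsRelIdeal (X : Set T) : Prop :=
  ∀ F : Finset T, ↑F ⊆ X → ∀ z : T, (z : L) ≤ F.sup (↑) → z ∈ X

def relIdealClosure : ClosureOperator (Set T) :=
  .ofCompletePred (IsRelIdeal T) fun _ hA F hF z hz =>
    Set.mem_sInter.2 fun X hX => hA X hX F (hF.trans (Set.sInter_subset_of_mem hX)) z hz

abbrev RelIdeal : Type _ := (relIdealClosure T).Closeds

namespace RelIdeal

instance : CompleteLattice (RelIdeal T) := (relIdealClosure T).gi.liftCompleteLattice

variable {T}

lemma isRelIdeal (X : RelIdeal T) : IsRelIdeal T X.1 := X.2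

lemma le_iff_subset {X Y : RelIdeal T} : X ≤ Y ↔ X.1 ⊆ Y.1 := Iff.rfl

variable (T) in
def principal (a : L) : RelIdeal T :=
  ⟨{t | (t : L) ≤ a}, fun _ hF _ hz => hz.trans (Finset.sup_le fun _ ht => hF ht)⟩

lemma mem_principal {a : L} {t : T} : t ∈ (principal T a).1 ↔ (t : L) ≤ a := Iff.rfl

lemma principal_le_principal_iff {a b : L} (ha : a ∈ T) :
    principal T a ≤ principal T b ↔ a ≤ b :=
  ⟨fun h => h (show ⟨a, ha⟩ ∈ (principal T a).1 from le_rfl),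
    fun hab _ ht => le_trans ht hab⟩

lemma principal_injOn : Set.InjOn (principal T) T := fun _ ha _ hb h =>
  le_antisymm ((principal_le_principal_iff ha).1 h.le) ((principal_le_principal_iff hb).1 h.ge)

lemma principal_inf (a b : L) : principal T (a ⊓ b) = principal T a ⊓ principal T b := by
  refine le_antisymm (le_inf ?_ ?_) fun t ht => ?_
  · exact fun _ ht => le_trans ht inf_le_left
  · exact fun _ ht => le_trans ht inf_le_right
  · exact le_inf (le_iff_subset.1 inf_le_left ht) (le_iff_subset.1 inf_le_right ht)

lemma principal_sup {a b : L} (ha : a ∈ T) (hb : b ∈ T) :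
    principal T (a ⊔ b) = principal T a ⊔ principal T b := by
  classical
  refine le_antisymm (fun t ht => ?_) (sup_le ?_ ?_)
  · refine isRelIdeal _ {⟨a, ha⟩, ⟨b, hb⟩} ?_ t (by simpa using mem_principal.1 ht)
    simp only [Finset.coe_insert, Finset.coe_singleton, Set.insert_subset_iff,
      Set.singleton_subset_iff]
    exact ⟨le_iff_subset.1 le_sup_left (show _ ≤ a from le_rfl),
      le_iff_subset.1 le_sup_right (show _ ≤ b from le_rfl)⟩
  · exact fun _ ht => le_trans ht le_sup_left
  · exact fun _ ht => le_trans ht le_sup_right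

lemma principal_sup_le_principal_iff {a b c : L} (ha : a ∈ T) (hb : b ∈ T) :
    principal T (a ⊔ b) ≤ principal T c ↔ a ⊔ b ≤ c := by
  rw [principal_sup ha hb, sup_le_iff, sup_le_iff, principal_le_principal_iff ha,
    principal_le_principal_iff hb]

lemma principal_bot : principal T ⊥ = ⊥ :=
  le_bot_iff.1 fun t ht => isRelIdeal ⊥ ∅ (Finset.coe_empty ▸ Set.empty_subset _) t ht

lemma principal_top [OrderTop L] : principal T ⊤ = ⊤ :=
  top_le_iff.1 fun _ _ => le_top

instance [Finite T] : Finite (RelIdeal T) := Subtype.finite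

end RelIdeal

open RelIdeal in
/-- The class of `{0,1}`-lattices has the finite embeddability property. -/
theorem bounded_lattice_fep (L : Type) [Lattice L] [BoundedOrder L]
    (S : Set L) (hS : S.Finite) (hbot : (⊥ : L) ∈ S) (htop : (⊤ : L) ∈ S) :
    ∃ (K : Type) (_ : Lattice K) (_ : BoundedOrder K) (_ : Fintype K) (f : S → K),
      Function.Injective f ∧
      f ⟨⊥, hbot⟩ = ⊥ ∧ f ⟨⊤, htop⟩ = ⊤ ∧
      ∀ a b c : S,
        (((a : L) ⊔ (b : L) = (c : L)) ↔ f a ⊔ f b = f c) ∧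
        (((a : L) ⊓ (b : L) = (c : L)) ↔ f a ⊓ f b = f c) := by
  set T := infClosure S
  have hST : S ⊆ T := subset_infClosure
  have : Finite T := hS.infClosure.to_subtype
  refine ⟨RelIdeal T, inferInstance, inferInstance, Fintype.ofFinite _,
    fun a => principal T a, fun a b h => Subtype.ext (principal_injOn (hST a.2) (hST b.2) h),
    principal_bot, principal_top, fun ⟨a, ha⟩ ⟨b, hb⟩ ⟨c, hc⟩ => ⟨?_, ?_⟩⟩
  · rw [← principal_sup (hST ha) (hST hb), le_antisymm_iff, le_antisymm_iff,
      principal_sup_le_principal_iff (hST ha) (hST hb), principal_le_principal_iff (hST hc)]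
  · have hab : a ⊓ b ∈ T := infClosed_infClosure (hST ha) (hST hb)
    rw [← principal_inf, le_antisymm_iff, le_antisymm_iff, principal_le_principal_iff hab,
      principal_le_principal_iff (hST hc)]
end

section
/- The variety of groups does not have the finite embeddability property: there exist a group G and a finite subset S ⊆ G such that for every finite group E there is no injective map f : S → E satisfying all of: f (a * b) = f a * f b for all a, b ∈ S with a * b ∈ S; f (a⁻¹) = (f a)⁻¹ for all a ∈ S with a⁻¹ ∈ S; and f 1 = 1 whenever 1 ∈ S. -/
/-!
The witness is the Baumslag–Solitar relation `t a² t⁻¹ = a³`. In a finite group it forces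
`a²` and `a³` to have the same order, so the order of `a` is odd, `a` is a power of `a²`, and
`t a t⁻¹` is a power of `a³`; in particular `t a t⁻¹` commutes with `a`. A finite partial
subgroup containing the words that witness the relation and the two products `(t a t⁻¹) a`,
`a (t a t⁻¹)` therefore cannot embed into a finite group as soon as these two products differ.
They do differ for two explicit permutations of `ℤ × ℕ`: `a` shifts the first coordinate and
`t` is built from the bijections `(q, m) ↦ (k q + m % k, m / k)` for `k = 2, 3`, which turn
the shift by one into the shift by `k`.
-/

theorem Nat.coprime_two_of_div_gcd_two_eq_div_gcd_three {n : ℕ} (hn : n ≠ 0)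
    (h : n / n.gcd 2 = n / n.gcd 3) : n.Coprime 2 := by
  rw [Nat.coprime_two_right]
  by_contra hodd
  obtain ⟨k, rfl⟩ := (Nat.not_odd_iff_even.mp hodd).two_dvd
  rw [Nat.gcd_eq_right (dvd_mul_right 2 k)] at h
  rcases Nat.coprime_or_dvd_of_prime Nat.prime_three (2 * k) with h3 | h3
  · rw [Nat.Coprime.gcd_eq_one h3.symm] at h
    omega
  · rw [Nat.gcd_eq_right h3] at h
    omega

section Group

variable {G : Type*} [Group G]

theorem commute_conj_of_conj_pow_eq {a t : G} {p q : ℕ} (hp : (orderOf a).Coprime p)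
    (h : t * a ^ p * t⁻¹ = a ^ q) : Commute (t * a * t⁻¹) a := by
  obtain ⟨m, hm⟩ := exists_pow_eq_self_of_coprime hp.symm
  have : t * a * t⁻¹ = a ^ (q * m) := by rw [pow_mul, ← h, conj_pow, hm]
  rw [this]
  exact Commute.pow_self a _

theorem IsOfFinOrder.commute_conj_of_conj_sq_eq_cube {a t : G} (ha : IsOfFinOrder a)
    (h : t * a ^ 2 * t⁻¹ = a ^ 3) : Commute (t * a * t⁻¹) a := by
  have hord := SemiconjBy.orderOf_eq t (mul_inv_eq_iff_eq_mul.mp h)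
  rw [orderOf_pow' a two_ne_zero, orderOf_pow' a three_ne_zero] at hord
  exact commute_conj_of_conj_pow_eq
    (Nat.coprime_two_of_div_gcd_two_eq_div_gcd_three ha.orderOf_pos.ne' hord) h

theorem conj_pow_eq_of_semiconjBy {a e e' : G} {p q : ℕ} (he : SemiconjBy e a (a ^ p))
    (he' : SemiconjBy e' a (a ^ q)) : (e' * e⁻¹) * a ^ p * (e' * e⁻¹)⁻¹ = a ^ q := by
  calc (e' * e⁻¹) * a ^ p * (e' * e⁻¹)⁻¹ = e' * (e⁻¹ * (a ^ p * e)) * e'⁻¹ := by group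
    _ = e' * a * e'⁻¹ := by rw [← he.eq, inv_mul_cancel_left]
    _ = a ^ q := by rw [he'.eq, mul_inv_cancel_right]

abbrev bsWitness (a t : G) : Set G :=
  {a, a * a, a * a * a, t, t⁻¹, t * a, t * a * a, t * a * t⁻¹, t * a * t⁻¹ * a, a * (t * a * t⁻¹)}

theorem commute_of_injOn_bsWitness {E : Type*} [Group E] [Finite E] {a t : G}
    (hrel : t * a ^ 2 * t⁻¹ = a ^ 3) {F : G → E} (hinj : Set.InjOn F (bsWitness a t))
    (hmul : ∀ x ∈ bsWitness a t, ∀ y ∈ bsWitness a t, x * y ∈ bsWitness a t →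
      F (x * y) = F x * F y)
    (hinv : ∀ x ∈ bsWitness a t, x⁻¹ ∈ bsWitness a t → F x⁻¹ = (F x)⁻¹) :
    Commute (t * a * t⁻¹) a := by
  rw [sq, pow_three', ← mul_assoc] at hrel
  have hrelF : F t * F a ^ 2 * (F t)⁻¹ = F a ^ 3 := by
    have := congrArg F hrel
    simp (disch := simp [bsWitness, hrel]) only [hmul, hinv] at this
    rwa [sq, pow_three', ← mul_assoc]
  have hcomm := (isOfFinOrder_of_finite (F a)).commute_conj_of_conj_sq_eq_cube hrelF
  apply hinj (by simp [bsWitness]) (by simp [bsWitness])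
  simp (disch := simp [bsWitness]) only [hmul, hinv]
  simpa only [mul_assoc] using hcomm.eq

end Group

def scaleEquiv (k : ℕ) [NeZero k] : ℤ × ℕ ≃ ℤ × ℕ :=
  ((Equiv.refl ℤ).prodCongr ((Nat.divModEquiv k).trans (Equiv.prodComm _ _))).trans <|
    (Equiv.prodAssoc _ _ _).symm.trans <| (Int.divModEquiv k).symm.prodCongr (Equiv.refl ℕ)

theorem scaleEquiv_apply (k : ℕ) [NeZero k] (q : ℤ) (m : ℕ) :
    scaleEquiv k (q, m) = (q * k + (m % k : ℕ), m / k) := by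
  simp [scaleEquiv]

theorem scaleEquiv_symm_apply (k : ℕ) [NeZero k] (x : ℤ) (n : ℕ) :
    (scaleEquiv k).symm (x, n) = (x / k, n * k + x.natMod k) := by
  simp [scaleEquiv, Nat.mod_eq_of_lt (Int.natMod_lt (NeZero.ne k))]

def shiftPerm : Equiv.Perm (ℤ × ℕ) := (Equiv.addRight 1).prodCongr (Equiv.refl ℕ)

theorem shiftPerm_pow_apply (n : ℕ) (p : ℤ × ℕ) : (shiftPerm ^ n) p = (p.1 + n, p.2) := by
  induction n with
  | zero => simp
  | succ n ih =>
    rw [pow_succ', Equiv.Perm.mul_apply, ih]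
    simp [shiftPerm, add_assoc]

theorem semiconjBy_scaleEquiv_shiftPerm (k : ℕ) [NeZero k] :
    SemiconjBy (scaleEquiv k : Equiv.Perm (ℤ × ℕ)) shiftPerm (shiftPerm ^ k) := by
  ext ⟨q, m⟩ <;> simp only [Equiv.Perm.mul_apply, shiftPerm_pow_apply] <;>
    simp [shiftPerm, scaleEquiv_apply, add_mul, add_right_comm]

def bsT : Equiv.Perm (ℤ × ℕ) := scaleEquiv 3 * (scaleEquiv 2)⁻¹

theorem bsT_conj_shiftPerm_sq : bsT * shiftPerm ^ 2 * bsT⁻¹ = shiftPerm ^ 3 :=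
  conj_pow_eq_of_semiconjBy (semiconjBy_scaleEquiv_shiftPerm 2)
    (semiconjBy_scaleEquiv_shiftPerm 3)

theorem not_commute_bsT_conj_shiftPerm : ¬Commute (bsT * shiftPerm * bsT⁻¹) shiftPerm := by
  intro h
  have := congrArg (· ((0 : ℤ), (0 : ℕ))) h.eq
  simp [bsT, Equiv.Perm.mul_apply, Equiv.Perm.inv_def, scaleEquiv_apply, scaleEquiv_symm_apply,
    shiftPerm, Int.natMod] at this

/-- The variety of groups does not have the finite embeddability property:
there are a group `G` and a finite subset `S ⊆ G` such that the relative partial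
subgroup induced on `S` does not embed into any finite group. -/
theorem groups_not_fep :
    ∃ (G : Type) (_ : Group G) (S : Set G), S.Finite ∧
      ∀ (E : Type) [Group E] [Finite E],
        ¬ ∃ f : S → E,
            Function.Injective f ∧
            (∀ (a b : S) (h : (a : G) * (b : G) ∈ S), f ⟨(a : G) * (b : G), h⟩ = f a * f b) ∧
            (∀ (a : S) (h : (a : G)⁻¹ ∈ S), f ⟨(a : G)⁻¹, h⟩ = (f a)⁻¹) ∧
            (∀ h : (1 : G) ∈ S, f ⟨1, h⟩ = 1) := by
  refine ⟨Equiv.Perm (ℤ × ℕ), inferInstance, bsWitness shiftPerm bsT, Set.toFinite _, ?_⟩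
  rintro E _ _ ⟨f, hinj, hmul, hinv, -⟩
  set F := Function.extend Subtype.val f 1
  have hF (x) (hx : x ∈ bsWitness shiftPerm bsT) : F x = f ⟨x, hx⟩ :=
    Subtype.val_injective.extend_apply f 1 ⟨x, hx⟩
  refine not_commute_bsT_conj_shiftPerm <| commute_of_injOn_bsWitness bsT_conj_shiftPerm_sq
    (F := F) ?_ ?_ ?_
  · intro x hx y hy hxy
    rw [hF x hx, hF y hy] at hxy
    exact congrArg Subtype.val (hinj hxy)
  · intro x hx y hy hxy
    rw [hF x hx, hF y hy, hF _ hxy]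
    exact hmul ⟨x, hx⟩ ⟨y, hy⟩ hxy
  · intro x hx hx'
    rw [hF x hx, hF _ hx']
    exact hinv ⟨x, hx⟩ hx'
end

section
/- Let K be a class of algebras with two binary operations (i.e., of triples (α, s, i) where s, i : α → α → α), and assume K is closed under isomorphic images and under binary products. Define a finite partial algebra to be a finite type P together with two partial binary operations u, v : P → P → Option P. Say an injective map e : P → α weakly embeds (P, u, v) into (α, s, i) ∈ K if for all a, b, c ∈ P: u a b = some c implies s (e a) (e b) = e c, and v a b = some c implies i (e a) (e b) = e c; say e relatively embeds (P, u, v) into (α, s, i) if moreover for all a, b ∈ P: u a b = none implies s (e a) (e b) is not in the range of e, and v a b = none implies i (e a) (e b) is not in the range of e. A member of K is finite if its underlying type is finite. Then the following are equivalent: (r,r) every finite partial algebra that relatively embeds into some member of K relatively embeds into some finite member of K; (r,w) every finite partial algebra that relatively embeds into some member of K weakly embeds into some finite member of K; (w,w) every finite partial algebra that weakly embeds into some member of K weakly embeds into some finite member of K. -/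
/-- An algebra with two binary operations. -/
structure Alg : Type 1 where
  carrier : Type
  s : carrier → carrier → carrier
  i : carrier → carrier → carrier

/-- `h` is an isomorphism between the algebras `A` and `B`. -/
def AlgIso (A B : Alg) (h : A.carrier → B.carrier) : Prop :=
  Function.Bijective h ∧ (∀ a b, h (A.s a b) = B.s (h a) (h b)) ∧
    (∀ a b, h (A.i a b) = B.i (h a) (h b))

/-- The binary product of two algebras, with componentwise operations. -/
def AlgProd (A B : Alg) : Alg where
  carrier := A.carrier × B.carrier
  s := fun x y => (A.s x.1 y.1, B.s x.2 y.2)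
  i := fun x y => (A.i x.1 y.1, B.i x.2 y.2)

/-- `e` weakly embeds the partial algebra `(P, u, v)` into the algebra `A`. -/
def WeakEmb {P : Type} (u v : P → P → Option P) (A : Alg) (e : P → A.carrier) : Prop :=
  Function.Injective e ∧
    (∀ a b c, u a b = some c → A.s (e a) (e b) = e c) ∧
    (∀ a b c, v a b = some c → A.i (e a) (e b) = e c)

/-- `e` relatively embeds the partial algebra `(P, u, v)` into the algebra `A`. -/
def RelEmb {P : Type} (u v : P → P → Option P) (A : Alg) (e : P → A.carrier) : Prop :=
  WeakEmb u v A e ∧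
    (∀ a b, u a b = none → A.s (e a) (e b) ∉ Set.range e) ∧
    (∀ a b, v a b = none → A.i (e a) (e b) ∉ Set.range e)

/-!
A subset `T` of an algebra `A` carries the induced partial algebra (`x ⋆ y` is defined exactly
when its value in `A` lies in `T`), which the inclusion relatively embeds into `A`. A weak
embedding `f` of it into `B` carries every relation `x ⋆ y = z` of `A` among points of `T` to `B`.

(r,w) ⇒ (w,w): replace a weakly embedded partial algebra by the one induced on the image of the
embedding; it has more defined values, so a weak embedding of it is one of the original.

(w,w) ⇒ (r,r): enlarge the image of a relative embedding `e` to the finite set `T` of the points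
`e a`, `e a ⋆ e b`. If `u a b` is undefined, then `e a ⋆ e b ∈ T` lies outside the image of `e`,
and `f` carries it to `f (e a) ⋆ f (e b)`, which by injectivity of `f` stays outside the image
of `f ∘ e`.
-/

open Function Set

section PartialOp

variable {P T α β : Type}

noncomputable def inducedOp (ι : T → α) (op : α → α → α) : T → T → Option T :=
  fun x y => partialInv ι (op (ι x) (ι y))

def PreservesPartialOp (u : P → P → Option P) (op : α → α → α) (e : P → α) : Prop :=
  ∀ a b c, u a b = some c → op (e a) (e b) = e c

def ReflectsUndefined (u : P → P → Option P) (op : α → α → α) (e : P → α) : Prop :=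
  ∀ a b, u a b = none → op (e a) (e b) ∉ range e

variable {u : P → P → Option P} {op : α → α → α} {op' : β → β → β}
  {g : P → T} {ι : T → α} {f : T → β}

theorem inducedOp_eq_some_iff (hι : Injective ι) {x y z : T} :
    inducedOp ι op x y = some z ↔ op (ι x) (ι y) = ι z :=
  (hι.isPartialInv z _).trans eq_comm

theorem inducedOp_eq_none_iff {x y : T} : inducedOp ι op x y = none ↔ op (ι x) (ι y) ∉ range ι := by
  simp [inducedOp, partialInv]

theorem preservesPartialOp_inducedOp (hι : Injective ι) :
    PreservesPartialOp (inducedOp ι op) op ι :=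
  fun _ _ _ => (inducedOp_eq_some_iff hι).1

theorem reflectsUndefined_inducedOp : ReflectsUndefined (inducedOp ι op) op ι :=
  fun _ _ => inducedOp_eq_none_iff.1

theorem PreservesPartialOp.comp_of_inducedOp (hι : Injective ι)
    (hu : PreservesPartialOp u op (ι ∘ g)) (hf : PreservesPartialOp (inducedOp ι op) op' f) :
    PreservesPartialOp u op' (f ∘ g) :=
  fun a b c h => hf _ _ _ ((inducedOp_eq_some_iff hι).2 (hu a b c h))

theorem ReflectsUndefined.comp_of_inducedOp (hι : Injective ι) (hf_inj : Injective f)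
    (hclosed : ∀ a b, op (ι (g a)) (ι (g b)) ∈ range ι)
    (hu : ReflectsUndefined u op (ι ∘ g)) (hf : PreservesPartialOp (inducedOp ι op) op' f) :
    ReflectsUndefined u op' (f ∘ g) := by
  rintro a b hab ⟨c, hc⟩
  obtain ⟨z, hz⟩ := hclosed a b
  have hfz : op' (f (g a)) (f (g b)) = f z := hf _ _ _ ((inducedOp_eq_some_iff hι).2 hz.symm)
  have hzc : z = g c := hf_inj (hfz.symm.trans hc.symm)
  exact hu a b hab ⟨c, by simpa [← hzc] using hz⟩

end PartialOp

section Alg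

variable {P T : Type} {u v : P → P → Option P} {A B : Alg}
  {g : P → T} {ι : T → A.carrier} {f : T → B.carrier}

theorem relEmb_inducedOp (hι : Injective ι) : RelEmb (inducedOp ι A.s) (inducedOp ι A.i) A ι :=
  ⟨⟨hι, preservesPartialOp_inducedOp hι, preservesPartialOp_inducedOp hι⟩,
    reflectsUndefined_inducedOp, reflectsUndefined_inducedOp⟩

theorem WeakEmb.comp_of_inducedOp (he : WeakEmb u v A (ι ∘ g)) (hι : Injective ι)
    (hf : WeakEmb (inducedOp ι A.s) (inducedOp ι A.i) B f) : WeakEmb u v B (f ∘ g) :=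
  ⟨hf.1.comp he.1.of_comp, PreservesPartialOp.comp_of_inducedOp hι he.2.1 hf.2.1,
    PreservesPartialOp.comp_of_inducedOp hι he.2.2 hf.2.2⟩

theorem RelEmb.comp_of_inducedOp (he : RelEmb u v A (ι ∘ g)) (hι : Injective ι)
    (hs : ∀ a b, A.s (ι (g a)) (ι (g b)) ∈ range ι) (hi : ∀ a b, A.i (ι (g a)) (ι (g b)) ∈ range ι)
    (hf : WeakEmb (inducedOp ι A.s) (inducedOp ι A.i) B f) : RelEmb u v B (f ∘ g) :=
  ⟨he.1.comp_of_inducedOp hι hf, ReflectsUndefined.comp_of_inducedOp hι hf.1 hs he.2.1 hf.2.1,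
    ReflectsUndefined.comp_of_inducedOp hι hf.1 hi he.2.2 hf.2.2⟩

def stepRange (A : Alg) (e : P → A.carrier) : Set A.carrier :=
  range e ∪ range (fun p : P × P => A.s (e p.1) (e p.2)) ∪
    range (fun p : P × P => A.i (e p.1) (e p.2))

theorem stepRange_finite [Finite P] (e : P → A.carrier) : (stepRange A e).Finite :=
  ((finite_range _).union (finite_range _)).union (finite_range _)

theorem range_subset_stepRange (e : P → A.carrier) : range e ⊆ stepRange A e :=
  subset_union_left.trans subset_union_left

theorem s_mem_stepRange (e : P → A.carrier) (a b : P) : A.s (e a) (e b) ∈ stepRange A e :=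
  Or.inl (Or.inr ⟨(a, b), rfl⟩)

theorem i_mem_stepRange (e : P → A.carrier) (a b : P) : A.i (e a) (e b) ∈ stepRange A e :=
  Or.inr ⟨(a, b), rfl⟩

end Alg

theorem fep_variants_equivalent_general (K : Set Alg) :
    List.TFAE
      [∀ (P : Type) [Finite P] (u v : P → P → Option P),
          (∃ A ∈ K, ∃ e : P → A.carrier, RelEmb u v A e) →
          ∃ A ∈ K, Finite A.carrier ∧ ∃ e : P → A.carrier, RelEmb u v A e,
        ∀ (P : Type) [Finite P] (u v : P → P → Option P),
          (∃ A ∈ K, ∃ e : P → A.carrier, RelEmb u v A e) →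
          ∃ A ∈ K, Finite A.carrier ∧ ∃ e : P → A.carrier, WeakEmb u v A e,
        ∀ (P : Type) [Finite P] (u v : P → P → Option P),
          (∃ A ∈ K, ∃ e : P → A.carrier, WeakEmb u v A e) →
          ∃ A ∈ K, Finite A.carrier ∧ ∃ e : P → A.carrier, WeakEmb u v A e] := by
  tfae_have 1 → 2 := by
    intro h P _ u v hrel
    obtain ⟨B, hB, hfin, f, hf⟩ := h P u v hrel
    exact ⟨B, hB, hfin, f, hf.1⟩
  tfae_have 2 → 3 := by
    rintro h P _ u v ⟨A, hA, e, he⟩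
    obtain ⟨B, hB, hfin, f, hf⟩ :=
      h P (inducedOp e A.s) (inducedOp e A.i) ⟨A, hA, e, relEmb_inducedOp he.1⟩
    exact ⟨B, hB, hfin, f, he.comp_of_inducedOp (g := id) he.1 hf⟩
  tfae_have 3 → 1 := by
    rintro h P _ u v ⟨A, hA, e, he⟩
    have : Finite (stepRange A e) := (stepRange_finite e).to_subtype
    obtain ⟨B, hB, hfin, f, hf⟩ := h (stepRange A e) (inducedOp (↑) A.s) (inducedOp (↑) A.i)
      ⟨A, hA, (↑), (relEmb_inducedOp Subtype.val_injective).1⟩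
    exact ⟨B, hB, hfin, _, he.comp_of_inducedOp
      (g := codRestrict e _ fun a => range_subset_stepRange e ⟨a, rfl⟩) Subtype.val_injective
      (by simpa using s_mem_stepRange e) (by simpa using i_mem_stepRange e) hf⟩
  tfae_finish

/-- For a class of algebras closed under isomorphic images and binary products,
the three variants of the finite embeddability property are equivalent. -/
theorem fep_variants_equivalent (K : Set Alg)
    (hiso : ∀ A B : Alg, (∃ h : A.carrier → B.carrier, AlgIso A B h) → A ∈ K → B ∈ K)
    (hprod : ∀ A ∈ K, ∀ B ∈ K, AlgProd A B ∈ K) :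
    List.TFAE
      [∀ (P : Type) [Finite P] (u v : P → P → Option P),
          (∃ A ∈ K, ∃ e : P → A.carrier, RelEmb u v A e) →
          ∃ A ∈ K, Finite A.carrier ∧ ∃ e : P → A.carrier, RelEmb u v A e,
        ∀ (P : Type) [Finite P] (u v : P → P → Option P),
          (∃ A ∈ K, ∃ e : P → A.carrier, RelEmb u v A e) →
          ∃ A ∈ K, Finite A.carrier ∧ ∃ e : P → A.carrier, WeakEmb u v A e,
        ∀ (P : Type) [Finite P] (u v : P → P → Option P),
          (∃ A ∈ K, ∃ e : P → A.carrier, WeakEmb u v A e) →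
          ∃ A ∈ K, Finite A.carrier ∧ ∃ e : P → A.carrier, WeakEmb u v A e] :=
  fep_variants_equivalent_general K
end

section
/- Let L be a lattice with the monotone interpolation property: for every monotone function f : L → L and every finite subset S ⊆ L there is a unary lattice polynomial function p on L with p x = f x for all x ∈ S. Then L is simple: every lattice congruence on L is either the equality relation or the total relation. -/
/-- The unary lattice polynomial functions on a lattice `L`: the smallest set of
functions `L → L` containing the identity and all constants and closed under
pointwise join and meet. -/
inductive IsLatPoly {L : Type} [Lattice L] : (L → L) → Prop
  | id : IsLatPoly (fun x => x)
  | const (c : L) : IsLatPoly (fun _ => c)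
  | sup {p q : L → L} : IsLatPoly p → IsLatPoly q → IsLatPoly (fun x => p x ⊔ q x)
  | inf {p q : L → L} : IsLatPoly p → IsLatPoly q → IsLatPoly (fun x => p x ⊓ q x)

/-- A lattice with the monotone interpolation property is simple: every lattice
congruence is the equality relation or the total relation. -/
theorem monotone_interpolation_implies_simple (L : Type) [Lattice L]
    (hinterp : ∀ f : L → L, Monotone f → ∀ S : Finset L,
      ∃ p : L → L, IsLatPoly p ∧ ∀ x ∈ S, p x = f x)
    (r : L → L → Prop) (hequiv : Equivalence r)
    (hcong : ∀ a b c d : L, r a b → r c d → r (a ⊔ c) (b ⊔ d) ∧ r (a ⊓ c) (b ⊓ d)) :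
    (∀ a b : L, r a b ↔ a = b) ∨ (∀ a b : L, r a b) := by
  classical
  by_cases htriv : ∀ a b : L, r a b → a = b
  · left
    intro a b
    exact ⟨htriv a b, fun h => h ▸ hequiv.refl a⟩
  · right
    push_neg at htriv
    obtain ⟨a, b, hab, hne⟩ := htriv
    set u := a ⊓ b with hu
    set v := a ⊔ b with hv
    have huv : r u v := by
      have h1 : r (a ⊓ b) (b ⊓ b) := (hcong a b b b hab (hequiv.refl b)).2
      have h2 : r (a ⊔ b) (b ⊔ b) := (hcong a b b b hab (hequiv.refl b)).1
      rw [inf_idem] at h1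
      rw [sup_idem] at h2
      exact hequiv.trans h1 (hequiv.symm h2)
    have hule : u ≤ v := inf_le_sup
    have hlt : u ≠ v := by
      intro h
      apply hne
      have h1 : a ≤ b := le_trans (le_sup_left.trans h.symm.le) inf_le_right
      have h2 : b ≤ a := le_trans (le_sup_right.trans h.symm.le) inf_le_left
      exact le_antisymm h1 h2
    have poly : ∀ p : L → L, IsLatPoly p → ∀ s t, r s t → r (p s) (p t) := by
      intro p hp
      induction hp with
      | id => exact fun s t h => h
      | const c => exact fun s t _ => hequiv.refl c
      | sup hp hq ihp ihq =>
          exact fun s t h => (hcong _ _ _ _ (ihp s t h) (ihq s t h)).1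
      | inf hp hq ihp ihq =>
          exact fun s t h => (hcong _ _ _ _ (ihp s t h) (ihq s t h)).2
    have key : ∀ x y : L, x ≤ y → r x y := by
      intro x y hxy
      set f : L → L := fun t => if v ≤ t then y else x with hf
      have hmono : Monotone f := by
        intro t1 t2 h
        simp only [hf]
        by_cases h1 : v ≤ t1
        · rw [if_pos h1, if_pos (h1.trans h)]
        · rw [if_neg h1]
          by_cases h2 : v ≤ t2
          · rw [if_pos h2]; exact hxy
          · rw [if_neg h2]
      obtain ⟨p, hp, hps⟩ := hinterp f hmono {u, v}
      have hpu : p u = x := by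
        rw [hps u (by simp)]
        simp only [hf]
        rw [if_neg fun h => hlt (le_antisymm hule h)]
      have hpv : p v = y := by
        rw [hps v (by simp)]
        simp only [hf, if_pos le_rfl]
      have := poly p hp u v huv
      rwa [hpu, hpv] at this
    intro c d
    exact hequiv.trans (key c (c ⊔ d) le_sup_left)
      (hequiv.symm (key d (c ⊔ d) le_sup_right))
end

section
/- Let L* be a countable, locally finite lattice that is universal for finite lattices and ultrahomogeneous for finite lattices. Then for every n, every monotone function f : (L*)ⁿ → L* (with respect to the componentwise order on (L*)ⁿ), and every finite sublattice A of L*, there is an n-ary lattice polynomial function p on L* such that p x = f x for every n-tuple x with all coordinates in A. -/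
/-- A lattice is locally finite if every finite subset is contained in a finite
sublattice (a finite subset closed under `⊔` and `⊓`). -/
def LatLocallyFinite (L : Type) [Lattice L] : Prop :=
  ∀ S : Finset L, ∃ T : Finset L, S ⊆ T ∧ ∀ a ∈ T, ∀ b ∈ T, a ⊔ b ∈ T ∧ a ⊓ b ∈ T

/-- A lattice embedding: an injective map preserving `⊔` and `⊓`. -/
def IsLatEmb {A L : Type} [Lattice A] [Lattice L] (e : A → L) : Prop :=
  Function.Injective e ∧ ∀ a b : A, e (a ⊔ b) = e a ⊔ e b ∧ e (a ⊓ b) = e a ⊓ e b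

/-- A lattice `L` is universal for finite lattices if every finite lattice admits
a lattice embedding into `L`. -/
def UnivFin (L : Type) [Lattice L] : Prop :=
  ∀ (A : Type) [Fintype A] [Lattice A], ∃ e : A → L, IsLatEmb e

/-- A lattice `L` is ultrahomogeneous for finite lattices if for all finite lattices
`A`, `B`, every lattice embedding `j : A → B` and every lattice embedding `e : A → L`,
there is a lattice embedding `e' : B → L` with `e' ∘ j = e`. -/
def UltraFin (L : Type) [Lattice L] : Prop :=
  ∀ (A B : Type) [Fintype A] [Lattice A] [Fintype B] [Lattice B]
    (j : A → B) (e : A → L), IsLatEmb j → IsLatEmb e →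
    ∃ e' : B → L, IsLatEmb e' ∧ e' ∘ j = e

/-- The `n`-ary lattice polynomial functions on a lattice `L`: the smallest set of
functions `(Fin n → L) → L` containing the coordinate projections and all constants
and closed under pointwise join and meet. -/
inductive IsLatPolyN {L : Type} [Lattice L] (n : ℕ) : ((Fin n → L) → L) → Prop
  | proj (k : Fin n) : IsLatPolyN n (fun x => x k)
  | const (c : L) : IsLatPolyN n (fun _ => c)
  | sup {p q : (Fin n → L) → L} :
      IsLatPolyN n p → IsLatPolyN n q → IsLatPolyN n (fun x => p x ⊔ q x)
  | inf {p q : (Fin n → L) → L} :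
      IsLatPolyN n p → IsLatPolyN n q → IsLatPolyN n (fun x => p x ⊓ q x)

/-!
For a finite sublattice `S` of `L` and `a ∈ S`, ultrahomogeneity realises inside `L` the
extension of `S` by a new bottom, a new top, an element `α` whose upper bounds in `S` are those
of `a`, and an element `δ` comparable only to the new bounds. The unary polynomial
`u ↦ u ⊓ α ⊔ δ` then maps `{x ∈ S | a ≤ x}` above `S`, and the rest of `S` to elements whose
meet with any element of `S` lies below `S`. Choosing `S ⊇ A ∪ f(Aⁿ)`, the polynomial
`x ↦ ⨆_{c ∈ Aⁿ} f c ⊓ ⨅_k (x k ⊓ α_{c k} ⊔ δ_{c k})` agrees with `f` on `Aⁿ`: the term of `c`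
is at most `f x` when `c ≤ x` by monotonicity, is killed by some coordinate otherwise, and
equals `f x` for `c = x`.
-/
inductive IndicatorExt {K : Type} (a : K) : Type
  | bot
  | top
  | alpha
  | delta
  | elem (x : K)

namespace IndicatorExt

variable {K : Type} [Lattice K] {a : K}

def le : IndicatorExt a → IndicatorExt a → Prop
  | bot, _ => True
  | _, top => True
  | elem x, elem y => x ≤ y
  | alpha, elem x => a ≤ x
  | alpha, alpha => True
  | delta, delta => True
  | _, _ => False

def sup : IndicatorExt a → IndicatorExt a → IndicatorExt a
  | bot, y => y
  | x, bot => x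
  | elem x, elem y => elem (x ⊔ y)
  | elem x, alpha => elem (x ⊔ a)
  | alpha, elem y => elem (a ⊔ y)
  | alpha, alpha => alpha
  | delta, delta => delta
  | _, _ => top

open Classical in
noncomputable def inf : IndicatorExt a → IndicatorExt a → IndicatorExt a
  | top, y => y
  | x, top => x
  | elem x, elem y => elem (x ⊓ y)
  | elem x, alpha => if a ≤ x then alpha else bot
  | alpha, elem y => if a ≤ y then alpha else bot
  | alpha, alpha => alpha
  | delta, delta => delta
  | _, _ => bot

noncomputable instance : Lattice (IndicatorExt a) where
  le := le
  le_refl x := by cases x <;> simp [le]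
  le_trans x y z := by
    cases x <;> cases y <;> cases z <;> simp [le] <;> exact le_trans
  le_antisymm x y := by
    cases x <;> cases y <;> simp [le]
    exact le_antisymm
  sup := sup
  le_sup_left x y := by cases x <;> cases y <;> simp [le, sup]
  le_sup_right x y := by cases x <;> cases y <;> simp [le, sup]
  sup_le x y z := by cases x <;> cases y <;> cases z <;> simp [le, sup] <;> tauto
  inf := inf
  inf_le_left x y := by cases x <;> cases y <;> simp [le, inf] <;> (try split_ifs) <;> simp_all
  inf_le_right x y := by cases x <;> cases y <;> simp [le, inf] <;> (try split_ifs) <;> simp_all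
  le_inf x y z := by
    cases x <;> cases y <;> cases z <;> simp [le, inf] <;> (try split_ifs) <;> simp_all

noncomputable instance : BoundedOrder (IndicatorExt a) where
  bot := bot
  bot_le _ := trivial
  top := top
  le_top x := by cases x <;> trivial

def encode : IndicatorExt a → Option (Option (Option (Option K)))
  | bot => none
  | top => some none
  | alpha => some (some none)
  | delta => some (some (some none))
  | elem x => some (some (some (some x)))

instance [Finite K] : Finite (IndicatorExt a) :=
  Finite.of_injective encode <| by
    rintro (_ | _ | _ | _ | x) (_ | _ | _ | _ | y) h <;> simp_all [encode]

theorem isLatEmb_elem : IsLatEmb (elem : K → IndicatorExt a) :=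
  ⟨fun _ _ h => elem.inj h, fun _ _ => ⟨rfl, rfl⟩⟩

theorem elem_inf_alpha_sup_delta_of_le {x : K} (hx : a ≤ x) :
    (elem x : IndicatorExt a) ⊓ alpha ⊔ delta = ⊤ := by
  change sup (inf _ _) _ = _
  simp [inf, hx, sup]; rfl

theorem elem_inf_alpha_sup_delta_inf_elem_of_not_le {x : K} (hx : ¬ a ≤ x) (y : K) :
    ((elem x : IndicatorExt a) ⊓ alpha ⊔ delta) ⊓ elem y = ⊥ := by
  change inf (sup (inf _ _) _) _ = _
  simp [inf, hx, sup]; rfl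

end IndicatorExt

section Interpolation

variable {L : Type} [Lattice L]

namespace IsLatEmb

variable {A : Type} [Lattice A] {e : A → L}

theorem map_sup (he : IsLatEmb e) (u v : A) : e (u ⊔ v) = e u ⊔ e v := (he.2 u v).1

theorem map_inf (he : IsLatEmb e) (u v : A) : e (u ⊓ v) = e u ⊓ e v := (he.2 u v).2

theorem monotone (he : IsLatEmb e) : Monotone e := fun u v h =>
  calc e u ≤ e u ⊔ e v := le_sup_left
    _ = e v := by rw [← he.map_sup, sup_eq_right.2 h]

end IsLatEmb

theorem Sublattice.isLatEmb_val (S : Sublattice L) : IsLatEmb (Subtype.val : S → L) :=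
  ⟨Subtype.val_injective, fun _ _ => ⟨rfl, rfl⟩⟩

theorem LatLocallyFinite.exists_finite_sublattice (h : LatLocallyFinite L) {s : Set L}
    (hs : s.Finite) : ∃ S : Sublattice L, s ⊆ S ∧ (S : Set L).Finite := by
  obtain ⟨T, hsT, hT⟩ := h hs.toFinset
  exact ⟨⟨T, fun a ha b hb => (hT a ha b hb).1, fun a ha b hb => (hT a ha b hb).2⟩,
    fun x hx => hsT (hs.mem_toFinset.2 hx), T.finite_toSet⟩

def IsIndicatorOn (T : Set L) (a g d : L) : Prop :=
  (∀ x ∈ T, a ≤ x → ∀ y ∈ T, y ≤ x ⊓ g ⊔ d) ∧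
    ∀ x ∈ T, ¬ a ≤ x → ∀ y ∈ T, ∀ z ∈ T, (x ⊓ g ⊔ d) ⊓ y ≤ z

theorem UltraFin.exists_isIndicatorOn (hh : UltraFin L) (S : Sublattice L) [Finite S]
    {a : L} (ha : a ∈ S) : ∃ g d : L, IsIndicatorOn S a g d := by
  have := Fintype.ofFinite S
  have := Fintype.ofFinite (IndicatorExt (⟨a, ha⟩ : S))
  obtain ⟨e, he, he_elem⟩ :=
    hh S (IndicatorExt (⟨a, ha⟩ : S)) _ _ IndicatorExt.isLatEmb_elem S.isLatEmb_val
  have he_elem (x : L) (hx : x ∈ S) : e (.elem ⟨x, hx⟩) = x := congrFun he_elem ⟨x, hx⟩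
  refine ⟨e .alpha, e .delta, fun x hx hax y hy => ?_, fun x hx hax y hy z hz => ?_⟩
  · rw [← he_elem x hx, ← he_elem y hy, ← he.map_inf, ← he.map_sup,
      IndicatorExt.elem_inf_alpha_sup_delta_of_le (show (⟨a, ha⟩ : S) ≤ ⟨x, hx⟩ from hax)]
    exact he.monotone le_top
  · rw [← he_elem x hx, ← he_elem y hy, ← he_elem z hz, ← he.map_inf, ← he.map_sup,
      ← he.map_inf, IndicatorExt.elem_inf_alpha_sup_delta_inf_elem_of_not_le
        (show ¬ (⟨a, ha⟩ : S) ≤ ⟨x, hx⟩ from hax)]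
    exact he.monotone bot_le

theorem IsLatPolyN.finset_sup' {n : ℕ} {ι : Type} {s : Finset ι} (hs : s.Nonempty)
    {F : ι → (Fin n → L) → L} (hF : ∀ i ∈ s, IsLatPolyN n (F i)) :
    IsLatPolyN n (fun x => s.sup' hs fun i => F i x) := by
  simpa only [← Finset.sup'_apply] using
    Finset.sup'_induction hs F (p := IsLatPolyN n) (fun _ hp _ hq => hp.sup hq) hF

theorem IsLatPolyN.finset_inf' {n : ℕ} {ι : Type} {s : Finset ι} (hs : s.Nonempty)
    {F : ι → (Fin n → L) → L} (hF : ∀ i ∈ s, IsLatPolyN n (F i)) :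
    IsLatPolyN n (fun x => s.inf' hs fun i => F i x) := by
  simpa only [← Finset.inf'_apply] using
    Finset.inf'_induction hs F (p := IsLatPolyN n) (fun _ hp _ hq => hp.inf hq) hF

theorem exists_isLatPolyN_eq_of_isIndicatorOn {n : ℕ} (hn : 0 < n) {f : (Fin n → L) → L}
    (hf : Monotone f) {A : Set L} (hA : A.Finite) (hA₀ : A.Nonempty) {T : Set L}
    (hAT : A ⊆ T) (hfT : ∀ c : Fin n → L, (∀ k, c k ∈ A) → f c ∈ T) {g d : L → L}
    (hgd : ∀ a ∈ A, IsIndicatorOn T a (g a) (d a)) :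
    ∃ p : (Fin n → L) → L, IsLatPolyN n p ∧ ∀ x : Fin n → L, (∀ k, x k ∈ A) → p x = f x := by
  set C := Fintype.piFinset fun _ : Fin n => hA.toFinset
  have hC {c : Fin n → L} : c ∈ C ↔ ∀ k, c k ∈ A := by simp [C]
  have hC₀ : C.Nonempty := ⟨fun _ => hA₀.some, hC.2 fun _ => hA₀.some_mem⟩
  have hn₀ : (Finset.univ : Finset (Fin n)).Nonempty := Finset.univ_nonempty_iff.2 ⟨⟨0, hn⟩⟩
  let χ (a u : L) : L := u ⊓ g a ⊔ d a
  refine ⟨fun x => C.sup' hC₀ fun c => f c ⊓ Finset.univ.inf' hn₀ fun k => χ (c k) (x k),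
    IsLatPolyN.finset_sup' _ fun c _ => (IsLatPolyN.const _).inf <|
      IsLatPolyN.finset_inf' _ fun k _ => ((IsLatPolyN.proj k).inf (.const _)).sup (.const _),
    fun x hx => le_antisymm (Finset.sup'_le _ _ fun c hc => ?_) ?_⟩
  · by_cases hcx : c ≤ x
    · exact inf_le_left.trans (hf hcx)
    obtain ⟨k, hk⟩ : ∃ k, ¬ c k ≤ x k := by simpa [Pi.le_def] using hcx
    calc f c ⊓ Finset.univ.inf' hn₀ (fun k => χ (c k) (x k))
        ≤ χ (c k) (x k) ⊓ f c :=
          le_inf (inf_le_right.trans (Finset.inf'_le _ (Finset.mem_univ k))) inf_le_left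
      _ ≤ f x := (hgd _ (hC.1 hc k)).2 _ (hAT (hx k)) hk _ (hfT c (hC.1 hc)) _ (hfT x hx)
  · refine le_trans ?_ (Finset.le_sup' _ (hC.2 hx))
    exact le_inf le_rfl <| Finset.le_inf' _ _ fun k _ =>
      (hgd _ (hx k)).1 _ (hAT (hx k)) le_rfl _ (hfT x hx)

end Interpolation

theorem fraisse_lattice_monotone_interpolation_general (L : Type) [Lattice L]
    (hlf : LatLocallyFinite L) (hh : UltraFin L)
    (n : ℕ) (f : (Fin n → L) → L) (hf : Monotone f)
    (A : Set L) (hA : A.Finite) :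
    ∃ p : (Fin n → L) → L, IsLatPolyN n p ∧
      ∀ x : Fin n → L, (∀ k, x k ∈ A) → p x = f x := by
  rcases Nat.eq_zero_or_pos n with rfl | hn
  · exact ⟨fun _ => f Fin.elim0, .const _, fun x _ => congrArg f (Subsingleton.elim _ _)⟩
  rcases A.eq_empty_or_nonempty with rfl | hA₀
  · exact ⟨fun x => x ⟨0, hn⟩, .proj _, fun x hx => (hx ⟨0, hn⟩).elim⟩
  obtain ⟨S, hS, hSfin⟩ :=
    hlf.exists_finite_sublattice (hA.union ((Set.Finite.pi fun _ => hA).image f))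
  have := hSfin.to_subtype
  choose! g d hgd using fun a (ha : a ∈ S) => hh.exists_isIndicatorOn S ha
  exact exists_isLatPolyN_eq_of_isIndicatorOn hn hf hA hA₀ (fun a ha => hS (.inl ha))
    (fun c hc => hS (.inr ⟨c, fun k _ => hc k, rfl⟩)) fun a ha => hgd a (hS (.inl ha))

/-- The typical countable lattice has the monotone interpolation property:
every monotone function of finitely many variables agrees with a lattice
polynomial function on every finite sublattice. -/
theorem fraisse_lattice_monotone_interpolation (L : Type) [Lattice L]
    (hc : Countable L) (hlf : LatLocallyFinite L) (hu : UnivFin L) (hh : UltraFin L)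
    (n : ℕ) (f : (Fin n → L) → L) (hf : Monotone f)
    (A : Set L) (hA : A.Finite)
    (hcl : ∀ a ∈ A, ∀ b ∈ A, a ⊔ b ∈ A ∧ a ⊓ b ∈ A) :
    ∃ p : (Fin n → L) → L, IsLatPolyN n p ∧
      ∀ x : Fin n → L, (∀ k, x k ∈ A) → p x = f x :=
  fraisse_lattice_monotone_interpolation_general L hlf hh n f hf A hA
end
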